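/- Let (𝔛, !𝔅, *ℭ, !*ℌ) be a fan quadruple, 𝒪 a strict total order on a subset 𝔈 = {ξ₁ < … < ξ_m} ⊆ 𝔅 ∪ ℭ ∪ ℌ, and let 𝔛₀ = 𝔛, 𝔛_i = 𝔛_{i−1}*(ξ_{m−i+1}) be the associated sequence of star subdivisions with induced quadruples; set 𝔈_i = {ξ_{m−i+1}, …, ξ_m}. Then the i-th step 𝔛_i → 𝔛_{i−1} is locally-convex with respect to the induced quadruple on 𝔛_i if and only if for every 𝔈_{i−1}-unsettled cone ζ ∈ 𝔛, the collection of cones of 𝔛_i contained in ζ, with the induced quadruple, is a convex subdivision of the affine fan of ζ. (Here one uses that the 𝔈_{i−1}-unsettled cones of 𝔛 coincide with the 𝔈_{i−1}-unsettled cones of 𝔛_{i−1}.) -/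

import Mathlib

namespace ToricPaper

open scoped BigOperators

/-- The ambient space `N_ℚ = ℚ^n`. -/
abbrev V (n : ℕ) := Fin n → ℚ

variable {n : ℕ}

/-- The cone of nonnegative rational combinations of elements of `A`. -/
def coneHull (A : Set (V n)) : Set (V n) :=
  {x | ∃ t : Finset (V n), ↑t ⊆ A ∧ ∃ c : V n → ℚ,
    (∀ v ∈ t, 0 ≤ c v) ∧ x = ∑ v ∈ t, c v • v}

/-- A rational polyhedral cone: the cone generated by finitely many vectors. -/
def IsPolyCone (σ : Set (V n)) : Prop := ∃ S : Finset (V n), σ = coneHull (S : Set (V n))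

/-- A cone is strongly convex if it contains no line. -/
def StronglyConvex (σ : Set (V n)) : Prop := ∀ x ∈ σ, -x ∈ σ → x = 0

/-- `F` is a face of `σ`, cut out by a linear functional nonnegative on `σ`. -/
def IsFaceOf (F σ : Set (V n)) : Prop :=
  ∃ m : (V n) →ₗ[ℚ] ℚ, (∀ x ∈ σ, 0 ≤ m x) ∧ F = {x ∈ σ | m x = 0}

/-- Dimension of a cone: the rank of its linear span. -/
noncomputable def coneDim (σ : Set (V n)) : ℕ := Module.finrank ℚ (Submodule.span ℚ σ)

/-- A ray of a cone is a one-dimensional face. -/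
def IsRayOf (ν σ : Set (V n)) : Prop := IsFaceOf ν σ ∧ coneDim ν = 1

/-- An abstract ray: a one-dimensional strongly convex rational polyhedral cone. -/
def IsRay (ν : Set (V n)) : Prop := IsPolyCone ν ∧ StronglyConvex ν ∧ coneDim ν = 1

/-- All faces of a cone `τ` (the affine fan induced by `τ`). -/
def faces (τ : Set (V n)) : Set (Set (V n)) := {F | IsFaceOf F τ}

/-- The rays of a cone `τ`. -/
def raysOf (τ : Set (V n)) : Set (Set (V n)) := {ν | IsRayOf ν τ}

/-- A fan: a finite collection of strongly convex rational polyhedral cones, closed under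
taking faces, such that the intersection of two cones is a face of each. -/
def IsFan (X : Set (Set (V n))) : Prop :=
  X.Finite ∧ (∀ σ ∈ X, IsPolyCone σ ∧ StronglyConvex σ) ∧
  (∀ σ ∈ X, ∀ F, IsFaceOf F σ → F ∈ X) ∧
  (∀ σ ∈ X, ∀ σ' ∈ X, IsFaceOf (σ ∩ σ') σ ∧ IsFaceOf (σ ∩ σ') σ')

/-- The rays (one-dimensional cones) belonging to a collection of cones. -/
def raysIn (X : Set (Set (V n))) : Set (Set (V n)) := {ν | ν ∈ X ∧ coneDim ν = 1}

/-- The support of a collection of cones. -/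
def support (X : Set (Set (V n))) : Set (V n) := ⋃₀ X

/-- The data of a fan quadruple `(X, !B, *C, !*H)`: three pairwise disjoint sets of rays. -/
def IsQuadData (X B C H : Set (Set (V n))) : Prop :=
  B ⊆ raysIn X ∧ C ⊆ raysIn X ∧ H ⊆ raysIn X ∧ Disjoint B C ∧ Disjoint B H ∧ Disjoint C H

/-- The data of a fan triple `(X, !B, *C)`: two disjoint sets of rays. -/
def IsTripleData (X B C : Set (Set (V n))) : Prop :=
  B ⊆ raysIn X ∧ C ⊆ raysIn X ∧ Disjoint B C

/-- `ρ` is a sorting function for the (restricted) quadruple on the faces of `ξ`: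
nonnegative on rays of `ξ` in `B`, nonpositive on rays of `ξ` in `C`, zero on rays of `ξ`
in none of `B`, `C`, `H`. -/
def IsSortingOn (ξ : Set (V n)) (B C H : Set (Set (V n))) (ρ : (V n) →ₗ[ℚ] ℚ) : Prop :=
  (∀ ν, IsRayOf ν ξ → ν ∈ B → ∀ x ∈ ν, 0 ≤ ρ x) ∧
  (∀ ν, IsRayOf ν ξ → ν ∈ C → ∀ x ∈ ν, ρ x ≤ 0) ∧
  (∀ ν, IsRayOf ν ξ → ν ∉ B → ν ∉ C → ν ∉ H → ∀ x ∈ ν, ρ x = 0)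

/-- The (restricted) affine quadruple on the faces of `ξ` admits a `Cf`-strict sorting
function: a sorting function which is moreover negative on `ν ∖ {0}` for every `ν ∈ Cf`. -/
def HasStrictSortingOn (ξ : Set (V n)) (B C H Cf : Set (Set (V n))) : Prop :=
  ∃ ρ : (V n) →ₗ[ℚ] ℚ, IsSortingOn ξ B C H ρ ∧
    ∀ ν, IsRayOf ν ξ → ν ∈ Cf → ∀ x ∈ ν, x ≠ 0 → ρ x < 0

/-- A cone `ξ` is `E`-unsettled if no ray of `ξ` lies in `E`. -/
def Unsettled (E : Set (Set (V n))) (ξ : Set (V n)) : Prop := ∀ ν, IsRayOf ν ξ → ν ∉ E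

/-- The quadruple `(X, !B, *C, !*H)` is `(Bs, Cf, Hs)`-sorted. -/
def SortedOn (X B C H Bs Cf Hs : Set (Set (V n))) : Prop :=
  ∀ ξ ∈ X, Unsettled ((B \ Bs) ∪ (H \ Hs)) ξ → HasStrictSortingOn ξ B C H Cf

/-- Partially-sorted: `(∅, C, ∅)`-sorted. -/
def PartiallySortedOn (X B C H : Set (Set (V n))) : Prop := SortedOn X B C H ∅ C ∅

/-- Well-sorted: `(B, C, H)`-sorted. -/
def WellSortedOn (X B C H : Set (Set (V n))) : Prop := SortedOn X B C H B C H

/-- A simplicial cone is generated by linearly independent vectors. -/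
def IsSimplicialCone (σ : Set (V n)) : Prop :=
  ∃ S : Finset (V n), LinearIndependent ℚ (fun v : S => (v : V n)) ∧
    σ = coneHull (S : Set (V n))

/-- A collection of cones is `E`-simplicial: every cone having a ray of `E` as a face is the
join of that ray with a cone of the collection of one less dimension. -/
def ESimplicialOn (X E : Set (Set (V n))) : Prop :=
  ∀ ν ∈ E, ∀ σ ∈ X, IsFaceOf ν σ →
    ∃ ζ ∈ X, σ = coneHull (ζ ∪ ν) ∧ coneDim σ = coneDim ζ + 1

/-- A subdivision of a fan: a fan with the same support, every cone of which is contained in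
a cone of the base. -/
def IsSubdivision (X' X : Set (Set (V n))) : Prop :=
  IsFan X' ∧ support X' = support X ∧ ∀ σ' ∈ X', ∃ σ ∈ X, σ' ⊆ σ

/-- A subdivision is efficient if it introduces no new rays. -/
def IsEfficient (X' X : Set (Set (V n))) : Prop := raysIn X' = raysIn X

/-- `ψ` is a good (convex piecewise-linear) function for the subdivision `X'` relative to the
cones of the base fan `X`: on each cone `τ` of `X`, `ψ` is convex, linear on each cone of
`X'` contained in `τ`, and the maximal subcones of linearity of `ψ` inside `τ` are exactly
the cones of `X'` (i.e. any convex subset of `τ` on which `ψ` is linear lies in one of them). -/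
def IsGoodFor (X X' : Set (Set (V n))) (ψ : V n → ℚ) : Prop :=
  ∀ τ ∈ X, ConvexOn ℚ τ ψ ∧
    (∀ σ' ∈ X', σ' ⊆ τ → ∃ m : (V n) →ₗ[ℚ] ℚ, ∀ x ∈ σ', ψ x = m x) ∧
    (∀ (m : (V n) →ₗ[ℚ] ℚ) (t : Set (V n)), t ⊆ τ → Convex ℚ t →
      (∀ x ∈ t, ψ x = m x) → ∃ σ' ∈ X', σ' ⊆ τ ∧ t ⊆ σ')

/-- Sign conditions of a good sorting function with respect to the quadruple data on `X'`. -/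
def SignedOn (X' B' C' H' : Set (Set (V n))) (ψ : V n → ℚ) : Prop :=
  (∀ ν ∈ B', ∀ x ∈ ν, 0 ≤ ψ x) ∧ (∀ ν ∈ C', ∀ x ∈ ν, ψ x ≤ 0) ∧
  (∀ ν ∈ raysIn X', ν ∉ B' → ν ∉ C' → ν ∉ H' → ∀ x ∈ ν, ψ x = 0)

/-- Sign conditions restricted to the rays contained in a cone `τ`. -/
def SignedOnIn (τ : Set (V n)) (X' B' C' H' : Set (Set (V n))) (ψ : V n → ℚ) : Prop :=
  (∀ ν ∈ B', ν ⊆ τ → ∀ x ∈ ν, 0 ≤ ψ x) ∧ (∀ ν ∈ C', ν ⊆ τ → ∀ x ∈ ν, ψ x ≤ 0) ∧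
  (∀ ν ∈ raysIn X', ν ⊆ τ → ν ∉ B' → ν ∉ C' → ν ∉ H' → ∀ x ∈ ν, ψ x = 0)

/-- A convex subdivision, with respect to a fan quadruple structure on `X'`. -/
def IsConvexSubdiv (X' X B' C' H' : Set (Set (V n))) : Prop :=
  IsSubdivision X' X ∧ ∃ ψ : V n → ℚ, IsGoodFor X X' ψ ∧ SignedOn X' B' C' H' ψ

/-- A locally-convex subdivision: for each cone of the base there is a good sorting function
on that cone. -/
def IsLocallyConvexSubdiv (X' X B' C' H' : Set (Set (V n))) : Prop :=
  IsSubdivision X' X ∧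
    ∀ τ ∈ X, ∃ ψ : V n → ℚ, IsGoodFor {τ} X' ψ ∧ SignedOnIn τ X' B' C' H' ψ

/-- Star subdivision of `X` at a ray `ν` contained in the support of `X`. -/
def starSubdiv (X : Set (Set (V n))) (ν : Set (V n)) : Set (Set (V n)) :=
  {σ | σ ∈ X ∧ ¬ ν ⊆ σ} ∪
  {τ | ∃ σ ∈ X, ν ⊆ σ ∧ ∃ ξ, IsFaceOf ξ σ ∧ ¬ ν ⊆ ξ ∧ τ = coneHull (ξ ∪ ν)}

/-- The set `S` of facets used in the extension construction `Ext(𝔗, ν)`. -/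
noncomputable def extS (τ ν : Set (V n)) : Set (Set (V n)) :=
  if coneDim (coneHull (τ ∪ ν)) = coneDim τ + 1 then {τ}
  else {ζ | (IsFaceOf ζ τ ∧ coneDim ζ + 1 = coneDim τ) ∧
    ∃ m : (V n) →ₗ[ℚ] ℚ, (∀ x ∈ ζ, m x = 0) ∧ (∃ v ∈ ν, v ≠ 0 ∧ m v = -1) ∧
      ∀ x ∈ τ, x ∉ ζ → 0 < m x}

/-- All faces of cones of `extS τ ν`. -/
noncomputable def extFaces (τ ν : Set (V n)) : Set (Set (V n)) :=
  {ξ | ∃ ζ ∈ extS τ ν, IsFaceOf ξ ζ}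

/-- The extension `Ext(𝔗, ν)` of the affine fan of `τ` by the ray `ν`. -/
noncomputable def Ext (τ ν : Set (V n)) : Set (Set (V n)) :=
  {ν} ∪ faces τ ∪ (fun ξ => coneHull (ξ ∪ ν)) '' extFaces τ ν

/-- The extension `Ext(𝔗', ν)` of a subdivision `𝒯'` of the affine fan of `τ` by the ray
`ν`. -/
noncomputable def ExtSub (T' : Set (Set (V n))) (τ ν : Set (V n)) : Set (Set (V n)) :=
  {ν} ∪ T' ∪ (fun ξ => coneHull (ξ ∪ ν)) ''
    {ξ | ∃ ζ' ∈ T', (∃ ζ ∈ extS τ ν, ζ' ⊆ ζ) ∧ IsFaceOf ξ ζ'}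

/-- Sequential convexity of a sequence of star subdivisions (the list gives the rays in the
order in which the star subdivisions are performed). -/
def SeqConvex (B C H : Set (Set (V n))) : Set (Set (V n)) → List (Set (V n)) → Prop
  | _, [] => True
  | X, ν :: rest =>
      IsLocallyConvexSubdiv (starSubdiv X ν) X B C H ∧
      SeqConvex B C H (starSubdiv X ν) rest

/-!
Star subdividing `X` at the rays of `L₂` keeps every `L₂`-unsettled cone `ζ` of `X`, and every
cone `τ` of the resulting fan `Y` is a direct join `ζ + cone S` of such a cone with generators `S`
of rays of `L₂`. A good function on `ζ` for the next subdivision, cut off outside `ζ`, is a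
witness of convexity on the faces of `ζ`. Conversely, a convexity witness `ψ` on the faces of `ζ`
pulls back to `ψ ∘ π` on `τ`, where `π` projects onto `span ζ` along `span S`: the new ray `ν`
lies in `ζ` because it is not a ray of `L₂`, so `π` matches the pieces inside `τ` with the
pieces inside `ζ`, and the rays of `S` are sent to `0`, where every sign condition holds.
Cones of `Y` not containing `ν` are not subdivided and take `ψ = 0`.
-/

structure IsConic (K : Set (V n)) : Prop where
  zero_mem : (0 : V n) ∈ K
  add_mem : ∀ ⦃x⦄, x ∈ K → ∀ ⦃y⦄, y ∈ K → x + y ∈ K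
  smul_mem : ∀ ⦃c : ℚ⦄, 0 ≤ c → ∀ ⦃x⦄, x ∈ K → c • x ∈ K

section ConeHull

variable {A A' K : Set (V n)}

lemma subset_coneHull (A : Set (V n)) : A ⊆ coneHull A :=
  fun v hv => ⟨{v}, by simpa using hv, fun _ => 1, fun _ _ => zero_le_one, by simp⟩

lemma isConic_coneHull (A : Set (V n)) : IsConic (coneHull A) where
  zero_mem := ⟨∅, by simp, fun _ => 0, by simp, by simp⟩
  add_mem := by
    classical
    rintro _ ⟨t₁, ht₁, c₁, hc₁, rfl⟩ _ ⟨t₂, ht₂, c₂, hc₂, rfl⟩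
    refine ⟨t₁ ∪ t₂, by simpa using And.intro ht₁ ht₂,
      fun v => (if v ∈ t₁ then c₁ v else 0) + (if v ∈ t₂ then c₂ v else 0), fun v _ => ?_, ?_⟩
    · exact add_nonneg (by split_ifs with h <;> simp [hc₁ v, h])
        (by split_ifs with h <;> simp [hc₂ v, h])
    · simp only [add_smul, Finset.sum_add_distrib, ite_smul, zero_smul]
      rw [Finset.sum_ite_mem, Finset.sum_ite_mem, Finset.union_inter_cancel_left,
        Finset.union_inter_cancel_right]
  smul_mem := by
    rintro c hc _ ⟨t, ht, c', hc', rfl⟩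
    exact ⟨t, ht, fun v => c * c' v, fun v hv => mul_nonneg hc (hc' v hv),
      by simp only [Finset.smul_sum, smul_smul]⟩

lemma IsConic.coneHull_subset (hK : IsConic K) (hA : A ⊆ K) : coneHull A ⊆ K := by
  classical
  rintro _ ⟨t, ht, c, hc, rfl⟩
  induction t using Finset.induction with
  | empty => simpa using hK.zero_mem
  | insert a s ha ih =>
    rw [Finset.sum_insert ha]
    exact hK.add_mem (hK.smul_mem (hc a (by simp)) (hA (ht (by simp))))
      (ih (fun v hv => ht (by simp [hv])) (fun v hv => hc v (by simp [hv])))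

lemma IsConic.coneHull_eq (hK : IsConic K) : coneHull K = K :=
  (hK.coneHull_subset subset_rfl).antisymm (subset_coneHull K)

lemma IsConic.convex (hK : IsConic K) : Convex ℚ K :=
  fun _ hx _ hy _ _ ha hb _ => hK.add_mem (hK.smul_mem ha hx) (hK.smul_mem hb hy)

lemma IsConic.inter (hK : IsConic K) (hK' : IsConic A) : IsConic (K ∩ A) where
  zero_mem := ⟨hK.zero_mem, hK'.zero_mem⟩
  add_mem _ hx _ hy := ⟨hK.add_mem hx.1 hy.1, hK'.add_mem hx.2 hy.2⟩
  smul_mem _ hc _ hx := ⟨hK.smul_mem hc hx.1, hK'.smul_mem hc hx.2⟩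

lemma IsConic.sep (hK : IsConic K) (m : V n →ₗ[ℚ] ℚ) : IsConic {x ∈ K | m x = 0} where
  zero_mem := ⟨hK.zero_mem, map_zero m⟩
  add_mem _ hx _ hy := ⟨hK.add_mem hx.1 hy.1, by rw [map_add, hx.2, hy.2, add_zero]⟩
  smul_mem _ hc _ hx := ⟨hK.smul_mem hc hx.1, by rw [map_smul, hx.2, smul_zero]⟩

lemma coneHull_mono (h : A ⊆ A') : coneHull A ⊆ coneHull A' :=
  fun _ ⟨t, ht, c, hc, hx⟩ => ⟨t, ht.trans h, c, hc, hx⟩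

lemma coneHull_coneHull (A : Set (V n)) : coneHull (coneHull A) = coneHull A :=
  (isConic_coneHull A).coneHull_eq

lemma coneHull_subset_iff (hK : IsConic K) : coneHull A ⊆ K ↔ A ⊆ K :=
  ⟨(subset_coneHull A).trans, hK.coneHull_subset⟩

lemma mem_coneHull_union_iff {x : V n} :
    x ∈ coneHull (A ∪ A') ↔ ∃ a ∈ coneHull A, ∃ b ∈ coneHull A', x = a + b := by
  classical
  constructor
  · rintro ⟨t, ht, c, hc, rfl⟩
    rw [← Finset.sum_filter_add_sum_filter_not t (· ∈ A)]
    refine ⟨_, ⟨t.filter (· ∈ A), fun v hv => (Finset.mem_filter.1 hv).2, c,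
        fun v hv => hc v (Finset.mem_filter.1 hv).1, rfl⟩,
      _, ⟨t.filter (· ∉ A), fun v hv => ?_, c, fun v hv => hc v (Finset.mem_filter.1 hv).1, rfl⟩,
      rfl⟩
    obtain ⟨hvt, hvA⟩ := Finset.mem_filter.1 hv
    exact (ht hvt).resolve_left hvA
  · rintro ⟨a, ha, b, hb, rfl⟩
    exact (isConic_coneHull _).add_mem (coneHull_mono Set.subset_union_left ha)
      (coneHull_mono Set.subset_union_right hb)

lemma coneHull_union_coneHull_left (A A' : Set (V n)) :
    coneHull (coneHull A ∪ A') = coneHull (A ∪ A') := by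
  ext x
  rw [mem_coneHull_union_iff, mem_coneHull_union_iff, coneHull_coneHull]

lemma mem_coneHull_singleton_iff {v x : V n} :
    x ∈ coneHull {v} ↔ ∃ t : ℚ, 0 ≤ t ∧ x = t • v := by
  constructor
  · rintro ⟨s, hs, c, hc, rfl⟩
    rcases Finset.subset_singleton_iff.mp (Finset.coe_subset_singleton.mp hs) with rfl | rfl
    · exact ⟨0, le_rfl, by simp⟩
    · exact ⟨c v, hc v (by simp), by simp⟩
  · rintro ⟨t, ht, rfl⟩
    exact (isConic_coneHull _).smul_mem ht (subset_coneHull _ rfl)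

lemma self_mem_coneHull_singleton (v : V n) : v ∈ coneHull {v} := subset_coneHull _ rfl

lemma span_coneHull (A : Set (V n)) :
    Submodule.span ℚ (coneHull A) = Submodule.span ℚ A := by
  refine le_antisymm (Submodule.span_le.mpr ?_) (Submodule.span_mono (subset_coneHull A))
  exact IsConic.coneHull_subset ⟨Submodule.zero_mem _, fun _ hx _ hy => Submodule.add_mem _ hx hy,
    fun c _ _ hx => Submodule.smul_mem _ c hx⟩ Submodule.subset_span

lemma mem_coneHull_union_ray_iff (hK : IsConic K) {v x : V n} :
    x ∈ coneHull (K ∪ coneHull {v}) ↔ ∃ y ∈ K, ∃ t : ℚ, 0 ≤ t ∧ x = y + t • v := by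
  simp only [mem_coneHull_union_iff, hK.coneHull_eq, coneHull_coneHull,
    mem_coneHull_singleton_iff]
  constructor
  · rintro ⟨y, hy, _, ⟨t, ht, rfl⟩, rfl⟩
    exact ⟨y, hy, t, ht, rfl⟩
  · rintro ⟨y, hy, t, ht, rfl⟩
    exact ⟨y, hy, _, ⟨t, ht, rfl⟩, rfl⟩

end ConeHull

section Faces

variable {F G σ : Set (V n)}

lemma isConic_halfspace (m : V n →ₗ[ℚ] ℚ) : IsConic {x | 0 ≤ m x} where
  zero_mem := by simp
  add_mem _ hx _ hy := by simpa using add_nonneg hx hy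
  smul_mem c hc _ hx := by simpa using mul_nonneg hc hx

lemma IsPolyCone.isConic (h : IsPolyCone σ) : IsConic σ := by
  obtain ⟨S, rfl⟩ := h
  exact isConic_coneHull _

lemma IsFaceOf.subset (h : IsFaceOf F σ) : F ⊆ σ := by
  obtain ⟨m, -, rfl⟩ := h
  exact fun x hx => hx.1

lemma IsFaceOf.refl (σ : Set (V n)) : IsFaceOf σ σ :=
  ⟨0, fun _ _ => le_rfl, by simp⟩

lemma IsFaceOf.isConic (hσ : IsConic σ) (h : IsFaceOf F σ) : IsConic F := by
  obtain ⟨m, -, rfl⟩ := h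
  exact hσ.sep m

lemma IsFaceOf.mem_of_add_mem (h : IsFaceOf F σ) {a b : V n} (ha : a ∈ σ) (hb : b ∈ σ)
    (hab : a + b ∈ F) : a ∈ F := by
  obtain ⟨m, hm, rfl⟩ := h
  have := hab.2
  rw [map_add] at this
  exact ⟨ha, by linarith [hm a ha, hm b hb]⟩

lemma sep_coneHull_eq {A : Set (V n)} {m : V n →ₗ[ℚ] ℚ} (hm : ∀ a ∈ A, 0 ≤ m a) :
    {x ∈ coneHull A | m x = 0} = coneHull {a ∈ A | m a = 0} := by
  classical
  refine subset_antisymm ?_ (((isConic_coneHull _).sep m).coneHull_subset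
    fun a ha => ⟨subset_coneHull _ ha.1, ha.2⟩)
  rintro _ ⟨⟨t, ht, c, hc, rfl⟩, hx⟩
  have hterm : ∀ v ∈ t, c v * m v = 0 := by
    simp only [map_sum, map_smul, smul_eq_mul] at hx
    exact (Finset.sum_eq_zero_iff_of_nonneg
      fun v hv => mul_nonneg (hc v hv) (hm v (ht hv))).1 hx
  refine ⟨t.filter (m · = 0), fun v hv => ?_, c, fun v hv => hc v (Finset.mem_filter.1 hv).1, ?_⟩
  · obtain ⟨hvt, hv0⟩ := Finset.mem_filter.1 hv
    exact ⟨ht hvt, hv0⟩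
  · refine (Finset.sum_filter_of_ne fun v hv hne => ?_).symm
    by_contra h
    exact hne (by rw [(mul_eq_zero.1 (hterm v hv)).resolve_right h, zero_smul])

lemma IsPolyCone.of_isFaceOf (h : IsPolyCone σ) (hF : IsFaceOf F σ) : IsPolyCone F := by
  obtain ⟨S, rfl⟩ := h
  obtain ⟨m, hm, rfl⟩ := hF
  exact ⟨S.filter (m · = 0), by
    rw [sep_coneHull_eq fun v hv => hm v (subset_coneHull _ hv), Finset.coe_filter]; rfl⟩

lemma IsPolyCone.finite_faces (h : IsPolyCone σ) : (faces σ).Finite := by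
  classical
  obtain ⟨S, rfl⟩ := h
  refine (S.powerset.finite_toSet.image fun T : Finset (V n) => coneHull (T : Set (V n))).subset ?_
  rintro F ⟨m, hm, rfl⟩
  exact ⟨S.filter (m · = 0), Finset.mem_powerset.2 (Finset.filter_subset _ _),
    by simp only [sep_coneHull_eq fun v hv => hm v (subset_coneHull _ hv), Finset.coe_filter]; rfl⟩

lemma IsFaceOf.trans (hσ : IsPolyCone σ) (hGF : IsFaceOf G F) (hFσ : IsFaceOf F σ) :
    IsFaceOf G σ := by
  classical
  obtain ⟨S, rfl⟩ := hσ
  obtain ⟨m, hm, rfl⟩ := hFσ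
  obtain ⟨g, hg, rfl⟩ := hGF
  obtain ⟨N, hN⟩ := Finset.exists_le (S.image fun s => -g s / m s)
  -- for large `N`, the functional `g + (N + 1) • m` is nonnegative on `σ` and cuts out `G`
  have hpos : ∀ s ∈ S, 0 < m s → 0 < g s + (N + 1) * m s := by
    intro s hs hms
    have := (div_le_iff₀ hms).1 (hN _ (Finset.mem_image_of_mem _ hs))
    nlinarith
  have hnn : ∀ s ∈ S, 0 ≤ (g + (N + 1) • m) s := by
    intro s hs
    have hsσ := subset_coneHull _ hs
    rcases (hm s hsσ).lt_or_eq with hms | hms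
    · simpa using (hpos s hs hms).le
    · simpa [← hms] using hg s ⟨hsσ, hms.symm⟩
  refine ⟨g + (N + 1) • m, (isConic_halfspace _).coneHull_subset hnn, subset_antisymm ?_ ?_⟩
  · rintro x ⟨⟨hx, hmx⟩, hgx⟩
    exact ⟨hx, by simp [hmx, hgx]⟩
  · rw [sep_coneHull_eq hnn]
    refine (((isConic_coneHull _).sep m).sep g).coneHull_subset fun s ⟨hsS, hs0⟩ => ?_
    have hsσ := subset_coneHull _ hsS
    have hms : m s = 0 := by
      by_contra hne
      have := hpos s hsS ((hm s hsσ).lt_of_ne (Ne.symm hne))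
      simp only [LinearMap.add_apply, LinearMap.smul_apply, smul_eq_mul] at hs0
      linarith
    exact ⟨⟨hsσ, hms⟩, by simpa [hms] using hs0⟩

lemma StronglyConvex.mono (h : StronglyConvex σ) (hsub : F ⊆ σ) : StronglyConvex F :=
  fun x hx hnx => h x (hsub hx) (hsub hnx)

end Faces

section Fans

variable {Y : Set (Set (V n))} {σ σ' F ν : Set (V n)}

lemma IsFan.isPolyCone (hY : IsFan Y) (hσ : σ ∈ Y) : IsPolyCone σ := (hY.2.1 σ hσ).1

lemma IsFan.isConic (hY : IsFan Y) (hσ : σ ∈ Y) : IsConic σ := (hY.isPolyCone hσ).isConic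

lemma IsFan.mem_of_isFaceOf (hY : IsFan Y) (hσ : σ ∈ Y) (hF : IsFaceOf F σ) : F ∈ Y :=
  hY.2.2.1 σ hσ F hF

lemma IsFan.isFaceOf_inter (hY : IsFan Y) (hσ : σ ∈ Y) (hσ' : σ' ∈ Y) :
    IsFaceOf (σ ∩ σ') σ := (hY.2.2.2 σ hσ σ' hσ').1

lemma IsFan.isFaceOf_inter_right (hY : IsFan Y) (hσ : σ ∈ Y) (hσ' : σ' ∈ Y) :
    IsFaceOf (σ ∩ σ') σ' := (hY.2.2.2 σ hσ σ' hσ').2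

lemma IsFan.stronglyConvex (hY : IsFan Y) (hσ : σ ∈ Y) : StronglyConvex σ := (hY.2.1 σ hσ).2

lemma IsFan.isFaceOf_of_subset (hY : IsFan Y) (hF : F ∈ Y) (hσ : σ ∈ Y) (h : F ⊆ σ) :
    IsFaceOf F σ := by
  simpa [Set.inter_eq_self_of_subset_left h] using hY.isFaceOf_inter_right hF hσ

lemma IsFan.isRay (hY : IsFan Y) (hν : ν ∈ raysIn Y) : IsRay ν :=
  ⟨hY.isPolyCone hν.1, hY.stronglyConvex hν.1, hν.2⟩

end Fans

section Rays

variable {ν ρ K : Set (V n)}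

lemma IsRay.exists_eq_coneHull_singleton (h : IsRay ν) : ∃ v, v ≠ 0 ∧ ν = coneHull {v} := by
  obtain ⟨hp, hs, hd⟩ := h
  have hK := hp.isConic
  obtain ⟨v, hv, hv0⟩ : ∃ v ∈ ν, v ≠ 0 := by
    by_contra! h0
    rw [coneDim, Submodule.span_eq_bot.2 h0] at hd
    simp at hd
  have hspan : Submodule.span ℚ {v} = Submodule.span ℚ ν :=
    Submodule.eq_of_le_of_finrank_le (Submodule.span_mono (by simpa using hv))
      (by rw [finrank_span_singleton hv0]; exact hd.le)
  refine ⟨v, hv0, subset_antisymm (fun x hx => ?_) (hK.coneHull_subset (by simpa using hv))⟩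
  obtain ⟨c, rfl⟩ := Submodule.mem_span_singleton.1 (hspan ▸ Submodule.subset_span hx)
  rcases le_or_gt 0 c with hc | hc
  · exact mem_coneHull_singleton_iff.2 ⟨c, hc, rfl⟩
  · refine absurd (hs v hv ?_) hv0
    simpa [smul_smul, hc.ne] using hK.smul_mem (neg_nonneg.2 (inv_nonpos.2 hc.le)) hx

lemma coneHull_singleton_subset_of_mem (hK : IsConic K) {u x : V n} (hx : x ∈ coneHull {u})
    (hxK : x ∈ K) (hx0 : x ≠ 0) : coneHull {u} ⊆ K := by
  obtain ⟨t, ht, rfl⟩ := mem_coneHull_singleton_iff.1 hx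
  have ht0 : t ≠ 0 := by rintro rfl; simp at hx0
  refine hK.coneHull_subset (Set.singleton_subset_iff.2 ?_)
  simpa [smul_smul, ht0] using hK.smul_mem (inv_nonneg.2 ht) hxK

lemma IsRay.eq_of_coneHull_singleton_subset (hρ : IsRay ρ) {v : V n} (hv0 : v ≠ 0)
    (h : coneHull {v} ⊆ ρ) : ρ = coneHull {v} := by
  obtain ⟨u, -, rfl⟩ := hρ.exists_eq_coneHull_singleton
  exact subset_antisymm (coneHull_singleton_subset_of_mem (isConic_coneHull _)
    (h (self_mem_coneHull_singleton v)) (self_mem_coneHull_singleton v) hv0) h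

end Rays

section Halfspaces

variable {σ : Set (V n)}

lemma exists_nonneg_between {ι κ : Type*} (s : Finset ι) (u : Finset κ) (a : ι → ℚ)
    (b : κ → ℚ) (hab : ∀ i ∈ s, ∀ j ∈ u, a i ≤ b j) (hb : ∀ j ∈ u, 0 ≤ b j) :
    ∃ t, 0 ≤ t ∧ (∀ i ∈ s, a i ≤ t) ∧ ∀ j ∈ u, t ≤ b j := by
  classical
  refine ⟨(insert 0 (s.image a)).max' (Finset.insert_nonempty _ _),
    Finset.le_max' _ _ (Finset.mem_insert_self _ _),
    fun i hi => Finset.le_max' _ _ (Finset.mem_insert_of_mem (Finset.mem_image_of_mem a hi)),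
    fun j hj => Finset.max'_le _ _ _ fun y hy => ?_⟩
  rcases Finset.mem_insert.1 hy with rfl | hy
  · exact hb j hj
  · obtain ⟨i, hi, rfl⟩ := Finset.mem_image.1 hy
    exact hab i hi j hj

lemma mem_coneHull_insert_iff {S : Finset (V n)} {v x : V n} :
    x ∈ coneHull (↑(insert v S) : Set (V n)) ↔ ∃ t : ℚ, 0 ≤ t ∧ x - t • v ∈ coneHull ↑S := by
  classical
  rw [Finset.coe_insert, Set.insert_eq, Set.union_comm, mem_coneHull_union_iff]
  simp only [mem_coneHull_singleton_iff]
  constructor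
  · rintro ⟨u, hu, _, ⟨t, ht, rfl⟩, rfl⟩
    exact ⟨t, ht, by simpa using hu⟩
  · rintro ⟨t, ht, hx⟩
    exact ⟨_, hx, _, ⟨t, ht, rfl⟩, by abel⟩

open Classical in
/-- One step of Fourier–Motzkin elimination. -/
lemma coneHull_insert_eq_halfspaces {S : Finset (V n)} {M : Finset (V n →ₗ[ℚ] ℚ)}
    (hM : coneHull ↑S = {x | ∀ m ∈ M, 0 ≤ m x}) (v : V n) :
    coneHull (↑(insert v S) : Set (V n)) = {x | ∀ m ∈ M.filter (0 ≤ · v) ∪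
      ((M.filter (0 < · v)) ×ˢ (M.filter (· v < 0))).image (fun p => p.1 v • p.2 - p.2 v • p.1),
        0 ≤ m x} := by
  ext x
  simp only [mem_coneHull_insert_iff, hM, Set.mem_ofPred_eq, Finset.mem_union, Finset.mem_filter,
    Finset.mem_image, Finset.mem_product, Prod.exists]
  constructor
  · rintro ⟨t, ht, hx⟩ m (⟨hm, hmv⟩ | ⟨p, q, ⟨⟨hp, hpv⟩, hq, hqv⟩, rfl⟩)
    · have := hx m hm
      simp only [map_sub, map_smul, smul_eq_mul] at this
      nlinarith
    · have h1 := hx p hp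
      have h2 := hx q hq
      simp only [map_sub, map_smul, smul_eq_mul, LinearMap.sub_apply,
        LinearMap.smul_apply] at h1 h2 ⊢
      nlinarith
  · intro hx
    obtain ⟨t, ht, hlow, hup⟩ := exists_nonneg_between (M.filter (· v < 0)) (M.filter (0 < · v))
      (fun q => q x / q v) (fun p => p x / p v)
      (fun q hq p hp => by
        obtain ⟨hq, hqv⟩ := Finset.mem_filter.1 hq
        obtain ⟨hp, hpv⟩ := Finset.mem_filter.1 hp
        have := hx _ (Or.inr ⟨p, q, ⟨⟨hp, hpv⟩, hq, hqv⟩, rfl⟩)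
        simp only [LinearMap.sub_apply, LinearMap.smul_apply, smul_eq_mul] at this
        rw [div_le_iff_of_neg hqv, div_mul_eq_mul_div, div_le_iff₀ hpv]
        linarith)
      (fun p hp => by
        obtain ⟨hp, hpv⟩ := Finset.mem_filter.1 hp
        exact div_nonneg (hx p (Or.inl ⟨hp, hpv.le⟩)) hpv.le)
    refine ⟨t, ht, fun m hm => ?_⟩
    simp only [map_sub, map_smul, smul_eq_mul, sub_nonneg]
    rcases lt_trichotomy (m v) 0 with hmv | hmv | hmv
    · exact (div_le_iff_of_neg hmv).1 (hlow m (Finset.mem_filter.2 ⟨hm, hmv⟩))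
    · simpa [hmv] using hx m (Or.inl ⟨hm, hmv.ge⟩)
    · exact (le_div_iff₀ hmv).1 (hup m (Finset.mem_filter.2 ⟨hm, hmv⟩))

lemma coneHull_empty : coneHull (∅ : Set (V n)) = {0} :=
  subset_antisymm (IsConic.coneHull_subset ⟨rfl, by simp, by simp⟩ (Set.empty_subset _))
    (Set.singleton_subset_iff.2 (isConic_coneHull _).zero_mem)

/-- Weyl's theorem. -/
lemma IsPolyCone.exists_halfspaces (h : IsPolyCone σ) :
    ∃ M : Finset (V n →ₗ[ℚ] ℚ), σ = {x | ∀ m ∈ M, 0 ≤ m x} := by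
  classical
  obtain ⟨S, rfl⟩ := h
  induction S using Finset.induction with
  | empty =>
    refine ⟨Finset.univ.image (fun i => LinearMap.proj i) ∪
      Finset.univ.image (fun i => -LinearMap.proj (R := ℚ) (φ := fun _ : Fin n => ℚ) i), ?_⟩
    ext x
    simp only [coneHull_empty, Finset.coe_empty, Set.mem_singleton_iff, Set.mem_ofPred_eq,
      le_antisymm_iff]
    simp only [Finset.mem_union, Finset.mem_image, Finset.mem_univ, true_and]
    refine ⟨fun h m hm => ?_, fun h => ⟨fun i => ?_, fun i => ?_⟩⟩
    · rcases hm with ⟨i, rfl⟩ | ⟨i, rfl⟩ <;> simp [le_antisymm h.1 h.2]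
    · simpa using h _ (Or.inr ⟨i, rfl⟩)
    · simpa using h _ (Or.inl ⟨i, rfl⟩)
  | insert v S _ ih =>
    obtain ⟨M, hM⟩ := ih
    exact ⟨_, coneHull_insert_eq_halfspaces hM v⟩

lemma isFaceOf_zero (hp : IsPolyCone σ) (hs : StronglyConvex σ) : IsFaceOf {0} σ := by
  obtain ⟨M, hM⟩ := hp.exists_halfspaces
  have hσ : ∀ x ∈ σ, ∀ m ∈ M, 0 ≤ m x := fun x hx => by rw [hM] at hx; exact hx
  refine ⟨∑ m ∈ M, m, fun x hx => ?_, ?_⟩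
  · simpa using Finset.sum_nonneg (hσ x hx)
  · ext x
    refine ⟨?_, ?_⟩
    · rintro rfl
      exact ⟨hp.isConic.zero_mem, map_zero _⟩
    · rintro ⟨hx, hx0⟩
      have hall := (Finset.sum_eq_zero_iff_of_nonneg (hσ x hx)).1 (by simpa using hx0)
      refine hs x hx ?_
      rw [hM]
      intro m hm
      simp [hall m hm]

/-- Move `x` backwards along `v` until the first facet inequality becomes tight. -/
lemma exists_isFaceOf_mem_add_smul (hp : IsPolyCone σ) (hs : StronglyConvex σ) {v x : V n}
    (hv : v ∈ σ) (hv0 : v ≠ 0) (hx : x ∈ σ) :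
    ∃ ξ, IsFaceOf ξ σ ∧ v ∉ ξ ∧ ∃ y ∈ ξ, ∃ t : ℚ, 0 ≤ t ∧ x = y + t • v := by
  classical
  obtain ⟨M, hM⟩ := hp.exists_halfspaces
  have hσ : ∀ {x}, x ∈ σ ↔ ∀ m ∈ M, 0 ≤ m x := fun {x} => by rw [hM]; rfl
  have hP : (M.filter (0 < · v)).Nonempty := by
    by_contra hP
    refine hv0 (hs v hv (hσ.2 fun m hm => ?_))
    have : m v = 0 := le_antisymm (not_lt.1 fun h => hP ⟨m, Finset.mem_filter.2 ⟨hm, h⟩⟩)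
      (hσ.1 hv m hm)
    simp [this]
  obtain ⟨m₀, hm₀, hmin⟩ := Finset.exists_min_image _ (fun m => m x / m v) hP
  obtain ⟨hm₀M, hm₀v⟩ := Finset.mem_filter.1 hm₀
  have hy : x - (m₀ x / m₀ v) • v ∈ σ := by
    refine hσ.2 fun m hm => ?_
    simp only [map_sub, map_smul, smul_eq_mul, sub_nonneg]
    rcases (hσ.1 hv m hm).lt_or_eq with hmv | hmv
    · exact (le_div_iff₀ hmv).1 (hmin m (Finset.mem_filter.2 ⟨hm, hmv⟩))
    · simpa [← hmv] using hσ.1 hx m hm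
  refine ⟨{z ∈ σ | m₀ z = 0}, ⟨m₀, fun z hz => hσ.1 hz m₀ hm₀M, rfl⟩,
    fun h => hm₀v.ne' h.2, _, ⟨hy, ?_⟩, _, div_nonneg (hσ.1 hx m₀ hm₀M) hm₀v.le, by abel⟩
  simp [hm₀v.ne']

end Halfspaces

section Joins

variable {ξ η σ : Set (V n)} {v : V n}

lemma coneHull_union_coneHull (A A' : Set (V n)) :
    coneHull (coneHull A ∪ coneHull A') = coneHull (A ∪ A') := by
  rw [coneHull_union_coneHull_left, Set.union_comm, coneHull_union_coneHull_left, Set.union_comm]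

lemma IsPolyCone.join {ρ : Set (V n)} (hξ : IsPolyCone ξ) (hρ : IsPolyCone ρ) :
    IsPolyCone (coneHull (ξ ∪ ρ)) := by
  classical
  obtain ⟨S, rfl⟩ := hξ
  obtain ⟨T, rfl⟩ := hρ
  exact ⟨S ∪ T, by rw [coneHull_union_coneHull, Finset.coe_union]⟩

lemma IsFaceOf.notMem_span (hξ : IsFaceOf ξ σ) (hv : v ∈ σ) (hvξ : v ∉ ξ) :
    v ∉ Submodule.span ℚ ξ := by
  obtain ⟨g, -, rfl⟩ := hξ
  refine fun hspan => hvξ ⟨hv, ?_⟩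
  exact (Submodule.span_le (p := LinearMap.ker g)).2 (fun y hy => hy.2) hspan

lemma exists_eq_zero_on_eq_one (hv : v ∉ Submodule.span ℚ ξ) :
    ∃ l : V n →ₗ[ℚ] ℚ, (∀ y ∈ ξ, l y = 0) ∧ l v = 1 := by
  obtain ⟨l, hl, hlv⟩ := LinearMap.exists_extend_of_notMem (0 : Submodule.span ℚ ξ →ₗ[ℚ] ℚ) hv 1
  exact ⟨l, fun y hy => by simpa using congr($hl ⟨y, Submodule.subset_span hy⟩), hlv⟩

lemma isFaceOf_join_self (hξ : IsConic ξ) (hv : v ∉ Submodule.span ℚ ξ) :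
    IsFaceOf ξ (coneHull (ξ ∪ coneHull {v})) := by
  obtain ⟨l, hl, hlv⟩ := exists_eq_zero_on_eq_one hv
  have hlx : ∀ y ∈ ξ, ∀ t : ℚ, l (y + t • v) = t := fun y hy t => by simp [hl y hy, hlv]
  refine ⟨l, fun x hx => ?_, ?_⟩
  · obtain ⟨y, hy, t, ht, rfl⟩ := (mem_coneHull_union_ray_iff hξ).1 hx
    rw [hlx y hy]
    exact ht
  · ext x
    refine ⟨fun hx => ⟨subset_coneHull _ (Or.inl hx), hl x hx⟩, ?_⟩
    rintro ⟨hx, hx0⟩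
    obtain ⟨y, hy, t, -, rfl⟩ := (mem_coneHull_union_ray_iff hξ).1 hx
    rw [hlx y hy] at hx0
    simpa [hx0] using hy

lemma IsFaceOf.join (hξ : IsConic ξ) (hv : v ∉ Submodule.span ℚ ξ) (hη : IsFaceOf η ξ) :
    IsFaceOf (coneHull (η ∪ coneHull {v})) (coneHull (ξ ∪ coneHull {v})) := by
  obtain ⟨l, hl, hlv⟩ := exists_eq_zero_on_eq_one hv
  obtain ⟨g, hg, rfl⟩ := hη
  -- correct `g` by a multiple of `l` so that it vanishes on `v` but is unchanged on `ξ`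
  have hfx : ∀ y ∈ ξ, ∀ t : ℚ, (g - g v • l) (y + t • v) = g y := fun y hy t => by
    simp only [LinearMap.sub_apply, LinearMap.smul_apply, map_add, map_smul, hl y hy, hlv,
      smul_eq_mul]
    ring
  refine ⟨g - g v • l, fun x hx => ?_, ?_⟩
  · obtain ⟨y, hy, t, -, rfl⟩ := (mem_coneHull_union_ray_iff hξ).1 hx
    rw [hfx y hy]
    exact hg y hy
  · ext x
    rw [Set.mem_sep_iff, mem_coneHull_union_ray_iff hξ, mem_coneHull_union_ray_iff (hξ.sep g)]
    constructor
    · rintro ⟨y, ⟨hy, hgy⟩, t, ht, rfl⟩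
      exact ⟨⟨y, hy, t, ht, rfl⟩, by rw [hfx y hy, hgy]⟩
    · rintro ⟨⟨y, hy, t, ht, rfl⟩, hx0⟩
      exact ⟨y, ⟨hy, by rwa [hfx y hy] at hx0⟩, t, ht, rfl⟩

lemma sep_join_eq_of_pos (hξ : IsConic ξ) {m : V n →ₗ[ℚ] ℚ} (hmv : 0 < m v)
    (hmξ : ∀ y ∈ ξ, 0 ≤ m y) :
    {x ∈ coneHull (ξ ∪ coneHull {v}) | m x = 0} = {y ∈ ξ | m y = 0} := by
  ext x
  refine ⟨?_, fun hx => ⟨subset_coneHull _ (Or.inl hx.1), hx.2⟩⟩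
  rintro ⟨hx, hx0⟩
  obtain ⟨y, hy, t, ht, rfl⟩ := (mem_coneHull_union_ray_iff hξ).1 hx
  simp only [map_add, map_smul, smul_eq_mul] at hx0
  have hmy := hmξ y hy
  have ht0 : t = 0 := by nlinarith
  subst ht0
  simpa [hx0] using And.intro hy (show m y = 0 by nlinarith)

lemma sep_join_eq_of_eq_zero (hξ : IsConic ξ) {m : V n →ₗ[ℚ] ℚ} (hmv : m v = 0) :
    {x ∈ coneHull (ξ ∪ coneHull {v}) | m x = 0} = coneHull ({y ∈ ξ | m y = 0} ∪ coneHull {v}) := by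
  ext x
  rw [Set.mem_sep_iff, mem_coneHull_union_ray_iff hξ, mem_coneHull_union_ray_iff (hξ.sep m)]
  constructor
  · rintro ⟨⟨y, hy, t, ht, rfl⟩, hx0⟩
    exact ⟨y, ⟨hy, by simpa [hmv] using hx0⟩, t, ht, rfl⟩
  · rintro ⟨y, ⟨hy, hmy⟩, t, ht, rfl⟩
    exact ⟨⟨y, hy, t, ht, rfl⟩, by simp [hmy, hmv]⟩

end Joins

section StarSubdivision

variable {Y : Set (Set (V n))} {ν σ τ F : Set (V n)} {v : V n}

lemma notMem_of_not_coneHull_singleton_subset {K : Set (V n)} (hK : IsConic K)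
    (h : ¬ coneHull {v} ⊆ K) : v ∉ K :=
  fun hv => h ((coneHull_subset_iff hK).2 (Set.singleton_subset_iff.2 hv))

lemma IsFaceOf.exists_pos {ξ : Set (V n)} (hξ : IsFaceOf ξ σ) (hv : v ∈ σ) (hvξ : v ∉ ξ) :
    ∃ m : V n →ₗ[ℚ] ℚ, (∀ x ∈ σ, 0 ≤ m x) ∧ (∀ y ∈ ξ, m y = 0) ∧ 0 < m v := by
  obtain ⟨m, hm, rfl⟩ := hξ
  exact ⟨m, hm, fun y hy => hy.2, (hm v hv).lt_of_ne fun h => hvξ ⟨hv, h.symm⟩⟩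

lemma isPolyCone_coneHull_singleton (v : V n) : IsPolyCone (coneHull {v}) := ⟨{v}, by simp⟩

lemma IsFan.exists_superset_of_mem_starSubdiv (hY : IsFan Y) (hτ : τ ∈ starSubdiv Y ν) :
    ∃ σ ∈ Y, τ ⊆ σ := by
  rcases hτ with ⟨hτ, -⟩ | ⟨σ, hσ, hνσ, ξ, hξ, -, rfl⟩
  · exact ⟨τ, hτ, subset_rfl⟩
  · exact ⟨σ, hσ, (coneHull_subset_iff (hY.isConic hσ)).2 (Set.union_subset hξ.subset hνσ)⟩

lemma IsFan.finite_starSubdiv (hY : IsFan Y) : (starSubdiv Y ν).Finite := by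
  refine (hY.1.union (hY.1.biUnion fun σ hσ =>
    (hY.isPolyCone hσ).finite_faces.image fun ξ => coneHull (ξ ∪ ν))).subset ?_
  rintro τ (⟨hτ, -⟩ | ⟨σ, hσ, -, ξ, hξ, -, rfl⟩)
  · exact Or.inl hτ
  · exact Or.inr (Set.mem_biUnion hσ ⟨ξ, hξ, rfl⟩)

lemma IsFan.support_starSubdiv (hY : IsFan Y) (hv0 : v ≠ 0) :
    support (starSubdiv Y (coneHull {v})) = support Y := by
  refine subset_antisymm ?_ ?_
  · rintro x ⟨τ, hτ, hx⟩
    obtain ⟨σ, hσ, hτσ⟩ := hY.exists_superset_of_mem_starSubdiv hτ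
    exact ⟨σ, hσ, hτσ hx⟩
  rintro x ⟨σ, hσ, hx⟩
  by_cases hνσ : coneHull {v} ⊆ σ
  · obtain ⟨ξ, hξ, hvξ, y, hy, t, ht, rfl⟩ := exists_isFaceOf_mem_add_smul (hY.isPolyCone hσ)
      (hY.stronglyConvex hσ) (hνσ (self_mem_coneHull_singleton v)) hv0 hx
    refine ⟨_, Or.inr ⟨σ, hσ, hνσ, ξ, hξ, fun h => hvξ (h (self_mem_coneHull_singleton v)), rfl⟩,
      ?_⟩
    exact (mem_coneHull_union_ray_iff (hξ.isConic (hY.isConic hσ))).2 ⟨y, hy, t, ht, rfl⟩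
  · exact ⟨σ, Or.inl ⟨hσ, hνσ⟩, hx⟩

lemma IsFan.mem_starSubdiv_of_isFaceOf (hY : IsFan Y)
    (hτ : τ ∈ starSubdiv Y (coneHull {v})) (hF : IsFaceOf F τ) :
    F ∈ starSubdiv Y (coneHull {v}) := by
  rcases hτ with ⟨hτ, hντ⟩ | ⟨σ, hσ, hνσ, ξ, hξ, hνξ, rfl⟩
  · exact Or.inl ⟨hY.mem_of_isFaceOf hτ hF, fun h => hντ (h.trans hF.subset)⟩
  have hξc := hξ.isConic (hY.isConic hσ)
  have hvξ := notMem_of_not_coneHull_singleton_subset hξc hνξ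
  obtain ⟨m, hm, rfl⟩ := hF
  have hmξ : ∀ y ∈ ξ, 0 ≤ m y := fun y hy => hm y (subset_coneHull _ (Or.inl hy))
  have hface : IsFaceOf {y ∈ ξ | m y = 0} ξ := ⟨m, hmξ, rfl⟩
  have hνface : ¬ coneHull {v} ⊆ {y ∈ ξ | m y = 0} :=
    fun h => hvξ (h (self_mem_coneHull_singleton v)).1
  rcases (hm v (subset_coneHull _ (Or.inr (self_mem_coneHull_singleton v)))).lt_or_eq with
    hmv | hmv
  · rw [sep_join_eq_of_pos hξc hmv hmξ]
    exact Or.inl ⟨hY.mem_of_isFaceOf (hY.mem_of_isFaceOf hσ hξ) hface, hνface⟩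
  · rw [sep_join_eq_of_eq_zero hξc hmv.symm]
    exact Or.inr ⟨σ, hσ, hνσ, _, hface.trans (hY.isPolyCone hσ) hξ, hνface, rfl⟩

lemma inter_join_eq {ξ : Set (V n)} (hσ : IsConic σ) (hτ : IsConic τ) (hξ : IsConic ξ)
    (hF : IsFaceOf (σ ∩ τ) τ) (hξτ : ξ ⊆ τ) (hvτ : v ∈ τ) (hvσ : v ∉ σ) :
    σ ∩ coneHull (ξ ∪ coneHull {v}) = σ ∩ ξ := by
  ext x
  refine ⟨?_, fun ⟨hxσ, hxξ⟩ => ⟨hxσ, subset_coneHull _ (Or.inl hxξ)⟩⟩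
  rintro ⟨hxσ, hx⟩
  obtain ⟨y, hy, t, ht, rfl⟩ := (mem_coneHull_union_ray_iff hξ).1 hx
  have htv : t • v ∈ σ := (hF.mem_of_add_mem (hτ.smul_mem ht hvτ) (hξτ hy)
    ⟨by rwa [add_comm], by rw [add_comm]; exact hτ.add_mem (hξτ hy) (hτ.smul_mem ht hvτ)⟩).1
  obtain rfl : t = 0 := by
    by_contra ht0
    exact hvσ (by simpa [smul_smul, ht0] using hσ.smul_mem (inv_nonneg.2 ht) htv)
  simpa using And.intro hxσ hy

lemma join_inter_join_eq {σ₁ σ₂ ξ₁ ξ₂ : Set (V n)} (hσ₁ : IsConic σ₁) (hσ₂ : IsConic σ₂)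
    (hξ₁ : IsFaceOf ξ₁ σ₁) (hξ₂ : IsFaceOf ξ₂ σ₂) (hF₁ : IsFaceOf (σ₁ ∩ σ₂) σ₁)
    (hF₂ : IsFaceOf (σ₁ ∩ σ₂) σ₂) (hv₁ : v ∈ σ₁) (hv₂ : v ∈ σ₂) (hvξ₁ : v ∉ ξ₁)
    (hvξ₂ : v ∉ ξ₂) :
    coneHull (ξ₁ ∪ coneHull {v}) ∩ coneHull (ξ₂ ∪ coneHull {v}) =
      coneHull ((ξ₁ ∩ ξ₂) ∪ coneHull {v}) := by
  have hc₁ := hξ₁.isConic hσ₁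
  have hc₂ := hξ₂.isConic hσ₂
  ext x
  rw [Set.mem_inter_iff, mem_coneHull_union_ray_iff hc₁, mem_coneHull_union_ray_iff hc₂,
    mem_coneHull_union_ray_iff (hc₁.inter hc₂)]
  refine ⟨?_, fun ⟨y, ⟨hy₁, hy₂⟩, t, ht, hx⟩ => ⟨⟨y, hy₁, t, ht, hx⟩, ⟨y, hy₂, t, ht, hx⟩⟩⟩
  rintro ⟨⟨y₁, hy₁, t₁, ht₁, rfl⟩, ⟨y₂, hy₂, t₂, ht₂, he⟩⟩
  -- `y₁`, `y₂` lie in the common face `σ₁ ∩ σ₂`; the functionals cutting out `ξ₁`, `ξ₂` then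
  -- force `t₁ = t₂`
  have hx₁ : y₁ + t₁ • v ∈ σ₁ := hσ₁.add_mem (hξ₁.subset hy₁) (hσ₁.smul_mem ht₁ hv₁)
  have hx₂ : y₂ + t₂ • v ∈ σ₂ := hσ₂.add_mem (hξ₂.subset hy₂) (hσ₂.smul_mem ht₂ hv₂)
  have hy₁σ₂ : y₁ ∈ σ₂ :=
    (hF₁.mem_of_add_mem (hξ₁.subset hy₁) (hσ₁.smul_mem ht₁ hv₁) ⟨hx₁, he ▸ hx₂⟩).2
  have hy₂σ₁ : y₂ ∈ σ₁ :=
    (hF₂.mem_of_add_mem (hξ₂.subset hy₂) (hσ₂.smul_mem ht₂ hv₂) ⟨he.symm ▸ hx₁, hx₂⟩).1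
  obtain ⟨m₁, hm₁, hm₁ξ, hm₁v⟩ := hξ₁.exists_pos hv₁ hvξ₁
  obtain ⟨m₂, hm₂, hm₂ξ, hm₂v⟩ := hξ₂.exists_pos hv₂ hvξ₂
  have e₁ := congr(m₁ $he)
  have e₂ := congr(m₂ $he)
  simp only [map_add, map_smul, smul_eq_mul, hm₁ξ y₁ hy₁, hm₂ξ y₂ hy₂] at e₁ e₂
  have := hm₁ y₂ hy₂σ₁
  have := hm₂ y₁ hy₁σ₂
  obtain rfl : t₁ = t₂ := le_antisymm (by nlinarith) (by nlinarith)
  obtain rfl : y₁ = y₂ := add_right_cancel he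
  exact ⟨y₁, ⟨hy₁, hy₂⟩, t₁, ht₁, rfl⟩

lemma IsFan.isFaceOf_inter_starSubdiv (hY : IsFan Y) {σa σb : Set (V n)}
    (ha : σa ∈ starSubdiv Y (coneHull {v})) (hb : σb ∈ starSubdiv Y (coneHull {v})) :
    IsFaceOf (σa ∩ σb) σa := by
  have hvν := self_mem_coneHull_singleton v
  rcases ha with ⟨ha, hνa⟩ | ⟨σ₁, hσ₁, hν₁, ξ₁, hξ₁, hνξ₁, rfl⟩ <;>
    rcases hb with ⟨hb, hνb⟩ | ⟨σ₂, hσ₂, hν₂, ξ₂, hξ₂, hνξ₂, rfl⟩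
  · exact hY.isFaceOf_inter ha hb
  · rw [inter_join_eq (hY.isConic ha) (hY.isConic hσ₂) (hξ₂.isConic (hY.isConic hσ₂))
      (hY.isFaceOf_inter_right ha hσ₂) hξ₂.subset (hν₂ hvν)
      (notMem_of_not_coneHull_singleton_subset (hY.isConic ha) hνa)]
    exact hY.isFaceOf_inter ha (hY.mem_of_isFaceOf hσ₂ hξ₂)
  · have hξ₁c := hξ₁.isConic (hY.isConic hσ₁)
    have hvξ₁ := notMem_of_not_coneHull_singleton_subset hξ₁c hνξ₁
    rw [Set.inter_comm, inter_join_eq (hY.isConic hb) (hY.isConic hσ₁) hξ₁c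
      (hY.isFaceOf_inter_right hb hσ₁) hξ₁.subset (hν₁ hvν)
      (notMem_of_not_coneHull_singleton_subset (hY.isConic hb) hνb), Set.inter_comm]
    exact (hY.isFaceOf_inter (hY.mem_of_isFaceOf hσ₁ hξ₁) hb).trans
      (((hY.isPolyCone hσ₁).of_isFaceOf hξ₁).join (isPolyCone_coneHull_singleton v))
      (isFaceOf_join_self hξ₁c (hξ₁.notMem_span (hν₁ hvν) hvξ₁))
  · have hξ₁c := hξ₁.isConic (hY.isConic hσ₁)
    have hvξ₁ := notMem_of_not_coneHull_singleton_subset hξ₁c hνξ₁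
    rw [join_inter_join_eq (hY.isConic hσ₁) (hY.isConic hσ₂) hξ₁ hξ₂
      (hY.isFaceOf_inter hσ₁ hσ₂) (hY.isFaceOf_inter_right hσ₁ hσ₂) (hν₁ hvν) (hν₂ hvν) hvξ₁
      (notMem_of_not_coneHull_singleton_subset (hξ₂.isConic (hY.isConic hσ₂)) hνξ₂)]
    exact (hY.isFaceOf_inter (hY.mem_of_isFaceOf hσ₁ hξ₁) (hY.mem_of_isFaceOf hσ₂ hξ₂)).join
      hξ₁c (hξ₁.notMem_span (hν₁ hvν) hvξ₁)

theorem IsFan.isSubdivision_starSubdiv (hY : IsFan Y) (hν : ν ∈ raysIn Y) :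
    IsSubdivision (starSubdiv Y ν) Y := by
  obtain ⟨v, hv0, rfl⟩ := (hY.isRay hν).exists_eq_coneHull_singleton
  refine ⟨⟨hY.finite_starSubdiv, fun τ hτ => ?_,
    fun τ hτ F hF => hY.mem_starSubdiv_of_isFaceOf hτ hF, fun σa ha σb hb => ⟨hY.isFaceOf_inter_starSubdiv ha hb, ?_⟩⟩,
    hY.support_starSubdiv hv0, fun τ hτ => hY.exists_superset_of_mem_starSubdiv hτ⟩
  · obtain ⟨σ, hσ, hτσ⟩ := hY.exists_superset_of_mem_starSubdiv hτ
    refine ⟨?_, (hY.stronglyConvex hσ).mono hτσ⟩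
    rcases hτ with ⟨hτ, -⟩ | ⟨σ₁, hσ₁, -, ξ, hξ, -, rfl⟩
    · exact hY.isPolyCone hτ
    · exact ((hY.isPolyCone hσ₁).of_isFaceOf hξ).join (isPolyCone_coneHull_singleton v)
  · rw [Set.inter_comm]
    exact hY.isFaceOf_inter_starSubdiv hb ha

end StarSubdivision

section Invariant

variable {X₀ P Y : Set (Set (V n))} {ζ τ η μ : Set (V n)}

lemma Unsettled.anti {P' : Set (Set (V n))} (h : Unsettled P' ζ) (hP : P ⊆ P') :
    Unsettled P ζ :=
  fun ρ hρ hρP => h ρ hρ (hP hρP)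

lemma Unsettled.insert_of_not_subset (h : Unsettled P ζ) (hμ : ¬ μ ⊆ ζ) :
    Unsettled (insert μ P) ζ := by
  rintro ρ hρ (rfl | hρP)
  · exact hμ hρ.1.subset
  · exact h ρ hρ hρP

def SplitsOver (X₀ P : Set (Set (V n))) (τ : Set (V n)) : Prop :=
  ∃ ζ ∈ X₀, Unsettled P ζ ∧ ∃ S : Set (V n), (∀ w ∈ S, w ≠ 0 ∧ coneHull {w} ∈ P) ∧
    Disjoint (Submodule.span ℚ ζ) (Submodule.span ℚ S) ∧ τ = coneHull (ζ ∪ S)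

lemma SplitsOver.of_isFaceOf (hX₀ : IsFan X₀) (hτ : SplitsOver X₀ P τ) (hη : IsFaceOf η τ) :
    SplitsOver X₀ P η := by
  obtain ⟨ζ, hζ, hζP, S, hS, hdisj, rfl⟩ := hτ
  obtain ⟨g, hg, rfl⟩ := hη
  have hface : IsFaceOf {y ∈ ζ | g y = 0} ζ :=
    ⟨g, fun y hy => hg y (subset_coneHull _ (Or.inl hy)), rfl⟩
  refine ⟨_, hX₀.mem_of_isFaceOf hζ hface,
    fun ρ hρ => hζP ρ ⟨hρ.1.trans (hX₀.isPolyCone hζ) hface, hρ.2⟩, {w ∈ S | g w = 0},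
    fun w hw => hS w hw.1,
    hdisj.mono (Submodule.span_mono fun y hy => hy.1) (Submodule.span_mono fun w hw => hw.1), ?_⟩
  rw [sep_coneHull_eq fun x hx => hg x (subset_coneHull _ hx)]
  congr 1
  ext
  simp [or_and_right]

lemma SplitsOver.insert_of_not_subset (h : SplitsOver X₀ P τ) (hμ : ¬ μ ⊆ τ) :
    SplitsOver X₀ (insert μ P) τ := by
  obtain ⟨ζ, hζ, hζP, S, hS, hdisj, rfl⟩ := h
  exact ⟨ζ, hζ, hζP.insert_of_not_subset
      fun h => hμ (h.trans (Set.subset_union_left.trans (subset_coneHull _))),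
    S, fun w hw => ⟨(hS w hw).1, Set.mem_insert_of_mem _ (hS w hw).2⟩, hdisj, rfl⟩

lemma SplitsOver.join {w : V n} (h : SplitsOver X₀ P η) (hw : w ∉ Submodule.span ℚ η)
    (hμ : ¬ coneHull {w} ⊆ η) :
    SplitsOver X₀ (insert (coneHull {w}) P) (coneHull (η ∪ coneHull {w})) := by
  obtain ⟨ζ, hζ, hζP, S, hS, hdisj, rfl⟩ := h
  have hw0 : w ≠ 0 := fun h => hw (h ▸ Submodule.zero_mem _)
  refine ⟨ζ, hζ, hζP.insert_of_not_subset fun h => hμ (h.trans (Set.subset_union_left.trans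
    (subset_coneHull _))), insert w S, ?_, ?_, ?_⟩
  · rintro w' (rfl | hw')
    · exact ⟨hw0, Set.mem_insert _ _⟩
    · exact ⟨(hS w' hw').1, Set.mem_insert_of_mem _ (hS w' hw').2⟩
  · rw [Submodule.span_insert, sup_comm]
    refine hdisj.disjoint_sup_right_of_disjoint_sup_left ?_
    rw [← Submodule.span_union, ← span_coneHull]
    exact (Submodule.disjoint_span_singleton' hw0).2 hw
  · rw [coneHull_union_coneHull]
    congr 1
    ext
    simp only [Set.mem_union, Set.mem_insert_iff, Set.mem_singleton_iff]
    tauto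

lemma mem_starSubdiv_of_mem_raysIn {ρ : Set (V n)} (hY : IsFan Y) (hρ : ρ ∈ raysIn Y)
    (hμ : μ ∈ raysIn Y) : ρ ∈ starSubdiv Y μ := by
  obtain ⟨v, hv0, rfl⟩ := (hY.isRay hμ).exists_eq_coneHull_singleton
  by_cases h : coneHull {v} ⊆ ρ
  · obtain rfl := (hY.isRay hρ).eq_of_coneHull_singleton_subset hv0 h
    refine Or.inr ⟨_, hρ.1, subset_rfl, {0},
      isFaceOf_zero (isPolyCone_coneHull_singleton v) (hY.stronglyConvex hρ.1),
      fun h' => hv0 (h' (self_mem_coneHull_singleton v)), ?_⟩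
    rw [Set.union_eq_right.2 (Set.singleton_subset_iff.2 (isConic_coneHull _).zero_mem),
      coneHull_coneHull]
  · exact Or.inl ⟨hρ.1, h⟩

lemma IsSubdivision.trans {Y' X : Set (Set (V n))} (h₁ : IsSubdivision Y' Y)
    (h₂ : IsSubdivision Y X) : IsSubdivision Y' X := by
  refine ⟨h₁.1, h₁.2.1.trans h₂.2.1, fun σ hσ => ?_⟩
  obtain ⟨τ, hτ, hστ⟩ := h₁.2.2 σ hσ
  obtain ⟨ρ, hρ, hτρ⟩ := h₂.2.2 τ hτ
  exact ⟨ρ, hρ, hστ.trans hτρ⟩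

/-- What survives of `X₀` after star subdividing at the rays of `P` (in any order). -/
structure StarSeqInvariant (X₀ P Y : Set (Set (V n))) : Prop where
  isSubdivision : IsSubdivision Y X₀
  raysIn_subset : raysIn X₀ ⊆ Y
  mem_of_unsettled : ∀ ζ ∈ X₀, Unsettled P ζ → ζ ∈ Y
  splitsOver : ∀ τ ∈ Y, SplitsOver X₀ P τ

lemma starSeqInvariant_self (hX₀ : IsFan X₀) : StarSeqInvariant X₀ ∅ X₀ where
  isSubdivision := ⟨hX₀, rfl, fun σ hσ => ⟨σ, hσ, subset_rfl⟩⟩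
  raysIn_subset := fun _ hρ => hρ.1
  mem_of_unsettled := fun _ hζ _ => hζ
  splitsOver := fun τ hτ => ⟨τ, hτ, fun _ _ h => h, ∅, by simp, by simp,
    by simp [(hX₀.isConic hτ).coneHull_eq]⟩

lemma StarSeqInvariant.step (hX₀ : IsFan X₀) (h : StarSeqInvariant X₀ P Y)
    (hμ : μ ∈ raysIn X₀) : StarSeqInvariant X₀ (insert μ P) (starSubdiv Y μ) := by
  have hY := h.isSubdivision.1
  have hμY : μ ∈ raysIn Y := ⟨h.raysIn_subset hμ, hμ.2⟩
  refine ⟨(hY.isSubdivision_starSubdiv hμY).trans h.isSubdivision,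
    fun ρ hρ => mem_starSubdiv_of_mem_raysIn hY ⟨h.raysIn_subset hρ, hρ.2⟩ hμY,
    fun ζ hζ hζP => Or.inl ⟨h.mem_of_unsettled ζ hζ (hζP.anti (Set.subset_insert _ _)),
      fun hμζ => hζP μ ⟨hX₀.isFaceOf_of_subset hμ.1 hζ hμζ, hμ.2⟩ (Set.mem_insert _ _)⟩, ?_⟩
  obtain ⟨w, -, rfl⟩ := (hY.isRay hμY).exists_eq_coneHull_singleton
  rintro τ (⟨hτ, hμτ⟩ | ⟨σ, hσ, hμσ, η, hη, hμη, rfl⟩)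
  · exact (h.splitsOver τ hτ).insert_of_not_subset hμτ
  · exact ((h.splitsOver σ hσ).of_isFaceOf hX₀ hη).join
      (hη.notMem_span (hμσ (self_mem_coneHull_singleton w))
        (notMem_of_not_coneHull_singleton_subset (hη.isConic (hY.isConic hσ)) hμη)) hμη

lemma starSeqInvariant_foldl (hX₀ : IsFan X₀) (L : List (Set (V n)))
    (hL : ∀ μ ∈ L, μ ∈ raysIn X₀) :
    StarSeqInvariant X₀ {μ | μ ∈ L} (L.foldl starSubdiv X₀) := by
  induction L using List.reverseRecOn with
  | nil => simpa using starSeqInvariant_self hX₀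
  | append_singleton L μ ih =>
    have hset : {ν | ν ∈ L ++ [μ]} = insert μ {ν | ν ∈ L} := by ext; simp [or_comm]
    rw [List.foldl_append, List.foldl_cons, List.foldl_nil, hset]
    exact (ih fun ν hν => hL ν (by simp [hν])).step hX₀ (hL μ (by simp))

end Invariant

section Restriction

variable {X X' B C H : Set (Set (V n))} {τ ζ : Set (V n)} {ψ : V n → ℚ}

lemma IsGoodFor.apply_zero (hX' : IsFan X') (hψ : IsGoodFor {τ} X' ψ) : ψ 0 = 0 := by
  obtain ⟨-, hlin, hmax⟩ := hψ τ rfl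
  obtain ⟨σ, hσ, hστ, -⟩ := hmax 0 ∅ (Set.empty_subset τ) convex_empty (by simp)
  obtain ⟨m, hm⟩ := hlin σ hσ hστ
  rw [hm 0 (hX'.isConic hσ).zero_mem, map_zero]

lemma IsGoodFor.exists_mem (hX' : IsFan X') (hψ : IsGoodFor {τ} X' ψ) {x : V n} (hx : x ∈ τ) :
    ∃ σ ∈ X', σ ⊆ τ ∧ x ∈ σ := by
  obtain ⟨m, hm⟩ : ∃ m : V n →ₗ[ℚ] ℚ, ψ x = m x := by
    by_cases hx0 : x = 0
    · exact ⟨0, by simp [hx0, hψ.apply_zero hX']⟩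
    · obtain ⟨l, -, hl⟩ := exists_eq_zero_on_eq_one (ξ := ∅) (v := x) (by simpa using hx0)
      exact ⟨ψ x • l, by simp [hl]⟩
  obtain ⟨σ, hσ, hστ, hxσ⟩ := (hψ τ rfl).2.2 m {x} (by simpa using hx) (convex_singleton x)
    (by simpa using hm)
  exact ⟨σ, hσ, hστ, hxσ rfl⟩

lemma eq_zero_of_mem_ray_of_not_subset {ρ K : Set (V n)} (hρ : IsRay ρ) (hK : IsConic K)
    {x : V n} (hx : x ∈ ρ) (hxK : x ∈ K) (hρK : ¬ ρ ⊆ K) : x = 0 := by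
  obtain ⟨u, -, rfl⟩ := hρ.exists_eq_coneHull_singleton
  by_contra hx0
  exact hρK (coneHull_singleton_subset_of_mem hK hx hxK hx0)

lemma isGoodFor_faces_indicator (hX' : IsFan X') (hψ : IsGoodFor {ζ} X' ψ) :
    IsGoodFor (faces ζ) {σ | σ ∈ X' ∧ σ ⊆ ζ} (ζ.indicator ψ) := by
  obtain ⟨hconv, hlin, hmax⟩ := hψ ζ rfl
  rintro _ ⟨g, hg, rfl⟩
  have hFζ : {x ∈ ζ | g x = 0} ⊆ ζ := fun x hx => hx.1
  have hψF : Set.EqOn ψ (ζ.indicator ψ) {x ∈ ζ | g x = 0} :=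
    fun x hx => (Set.indicator_of_mem hx.1 ψ).symm
  have hFconv : Convex ℚ {x ∈ ζ | g x = 0} := fun x hx y hy a b ha hb hab =>
    ⟨hconv.1 hx.1 hy.1 ha hb hab, by simp [hx.2, hy.2]⟩
  refine ⟨(hconv.subset hFζ hFconv).congr hψF, fun σ hσ hσF => ?_, ?_⟩
  · obtain ⟨m, hm⟩ := hlin σ hσ.1 hσ.2
    exact ⟨m, fun x hx => (hψF (hσF hx)).symm.trans (hm x hx)⟩
  · intro m t htF ht hψt
    obtain ⟨σ, hσ, hσζ, htσ⟩ := hmax m t (htF.trans hFζ) ht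
      fun x hx => (hψF (htF hx)).trans (hψt x hx)
    have hface : IsFaceOf {x ∈ σ | g x = 0} σ := ⟨g, fun x hx => hg x (hσζ hx), rfl⟩
    exact ⟨_, ⟨hX'.mem_of_isFaceOf hσ hface, fun x hx => hσζ hx.1⟩,
      fun x hx => ⟨hσζ hx.1, hx.2⟩, fun x hx => ⟨htσ hx, (htF hx).2⟩⟩

lemma IsFan.sep_subset {X' : Set (Set (V n))} (hX' : IsFan X') (ζ : Set (V n)) :
    IsFan {σ | σ ∈ X' ∧ σ ⊆ ζ} :=
  ⟨hX'.1.subset fun _ hσ => hσ.1, fun σ hσ => hX'.2.1 σ hσ.1,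
    fun _ hσ _ hF => ⟨hX'.mem_of_isFaceOf hσ.1 hF, hF.subset.trans hσ.2⟩,
    fun σ hσ σ' hσ' => hX'.2.2.2 σ hσ.1 σ' hσ'.1⟩

lemma support_faces (ζ : Set (V n)) : support (faces ζ) = ζ :=
  subset_antisymm (fun _ ⟨_, hF, hx⟩ => IsFaceOf.subset hF hx)
    (fun _ hx => ⟨ζ, IsFaceOf.refl ζ, hx⟩)

theorem isConvexSubdiv_faces_of_isGoodFor (hX : IsFan X) (hQ : IsQuadData X B C H)
    (hX' : IsFan X') (hζ : ζ ∈ X) (hψ : IsGoodFor {ζ} X' ψ) (hs : SignedOnIn ζ X' B C H ψ) :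
    IsConvexSubdiv {σ | σ ∈ X' ∧ σ ⊆ ζ} (faces ζ) B C H := by
  refine ⟨⟨hX'.sep_subset ζ, ?_, fun σ hσ => ⟨ζ, IsFaceOf.refl ζ, hσ.2⟩⟩, ζ.indicator ψ,
    isGoodFor_faces_indicator hX' hψ, ?_⟩
  · refine (support_faces ζ).symm ▸ subset_antisymm (fun x ⟨σ, hσ, hx⟩ => hσ.2 hx) fun x hx => ?_
    obtain ⟨σ, hσ, hσζ, hxσ⟩ := hψ.exists_mem hX' hx
    exact ⟨σ, ⟨hσ, hσζ⟩, hxσ⟩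
  have hoff : ∀ ρ ∈ raysIn X, ¬ ρ ⊆ ζ → ∀ x ∈ ρ, ζ.indicator ψ x = 0 := by
    intro ρ hρ hρζ x hx
    by_cases hxζ : x ∈ ζ
    · rw [Set.indicator_of_mem hxζ, eq_zero_of_mem_ray_of_not_subset (hX.isRay hρ)
        (hX.isConic hζ) hx hxζ hρζ, hψ.apply_zero hX']
    · exact Set.indicator_of_notMem hxζ ψ
  refine ⟨fun ρ hρ x hx => ?_, fun ρ hρ x hx => ?_, fun ρ hρ hB hC hH x hx => ?_⟩
  · by_cases hρζ : ρ ⊆ ζ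
    · rw [Set.indicator_of_mem (hρζ hx)]
      exact hs.1 ρ hρ hρζ x hx
    · rw [hoff ρ (hQ.1 hρ) hρζ x hx]
  · by_cases hρζ : ρ ⊆ ζ
    · rw [Set.indicator_of_mem (hρζ hx)]
      exact hs.2.1 ρ hρ hρζ x hx
    · rw [hoff ρ (hQ.2.1 hρ) hρζ x hx]
  · rw [Set.indicator_of_mem (hρ.1.2 hx)]
    exact hs.2.2 ρ ⟨hρ.1.1, hρ.2⟩ hρ.1.2 hB hC hH x hx

end Restriction

section LinearExtension

variable {K t : Set (V n)} {f : V n → ℚ}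

lemma IsConic.exists_sub_eq_of_mem_span (hK : IsConic K) {z : V n}
    (hz : z ∈ Submodule.span ℚ K) : ∃ p : V n × V n, p.1 ∈ K ∧ p.2 ∈ K ∧ z = p.1 - p.2 := by
  induction hz using Submodule.span_induction with
  | mem x hx => exact ⟨(x, 0), hx, hK.zero_mem, by simp⟩
  | zero => exact ⟨(0, 0), hK.zero_mem, hK.zero_mem, by simp⟩
  | add x y _ _ hx hy =>
    obtain ⟨⟨a, b⟩, ha, hb, rfl⟩ := hx
    obtain ⟨⟨c, d⟩, hc, hd, rfl⟩ := hy
    exact ⟨(a + c, b + d), hK.add_mem ha hc, hK.add_mem hb hd, sub_add_sub_comm a b c d⟩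
  | smul c x _ hx =>
    obtain ⟨⟨a, b⟩, ha, hb, rfl⟩ := hx
    rcases le_or_gt 0 c with hc | hc
    · exact ⟨(c • a, c • b), hK.smul_mem hc ha, hK.smul_mem hc hb, by simp [smul_sub]⟩
    · refine ⟨((-c) • b, (-c) • a), hK.smul_mem (by linarith) hb, hK.smul_mem (by linarith) ha, ?_⟩
      simp only [neg_smul, smul_sub]
      abel

lemma exists_linearMap_eqOn_of_additive (hK : IsConic K)
    (hadd : ∀ x ∈ K, ∀ y ∈ K, f (x + y) = f x + f y) :
    ∃ m : V n →ₗ[ℚ] ℚ, ∀ x ∈ K, f x = m x := by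
  classical
  have hf0 : f 0 = 0 := by simpa using hadd 0 hK.zero_mem 0 hK.zero_mem
  -- `f` induces a well-defined additive map on `span K = K - K`
  let g : V n → ℚ := fun z =>
    if h : ∃ p : V n × V n, p.1 ∈ K ∧ p.2 ∈ K ∧ z = p.1 - p.2 then
      f h.choose.1 - f h.choose.2 else 0
  have hg : ∀ a ∈ K, ∀ b ∈ K, g (a - b) = f a - f b := by
    intro a ha b hb
    have hex : ∃ p : V n × V n, p.1 ∈ K ∧ p.2 ∈ K ∧ a - b = p.1 - p.2 := ⟨(a, b), ha, hb, rfl⟩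
    obtain ⟨h1, h2, h3⟩ := hex.choose_spec
    have key := hadd _ ha _ h2
    rw [show a + hex.choose.2 = hex.choose.1 + b by rw [sub_eq_sub_iff_add_eq_add.1 h3],
      hadd _ h1 _ hb] at key
    simp only [g, dif_pos hex]
    linarith
  let G : Submodule.span ℚ K →+ ℚ :=
    { toFun := fun z => g z
      map_zero' := by simpa [hf0] using hg 0 hK.zero_mem 0 hK.zero_mem
      map_add' := by
        rintro ⟨z₁, hz₁⟩ ⟨z₂, hz₂⟩
        obtain ⟨⟨a, b⟩, ha, hb, rfl⟩ := hK.exists_sub_eq_of_mem_span hz₁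
        obtain ⟨⟨c, d⟩, hc, hd, rfl⟩ := hK.exists_sub_eq_of_mem_span hz₂
        simp only [Submodule.coe_add]
        rw [show a - b + (c - d) = (a + c) - (b + d) by abel, hg _ (hK.add_mem ha hc) _
          (hK.add_mem hb hd), hg a ha b hb, hg c hc d hd, hadd a ha c hc, hadd b hb d hd]
        ring }
  obtain ⟨m, hm⟩ := LinearMap.exists_extend G.toRatLinearMap
  refine ⟨m, fun x hx => ?_⟩
  have hmx : m x = g x := congr($hm ⟨x, Submodule.subset_span hx⟩)
  simpa [hmx, hf0] using (hg x hx 0 hK.zero_mem).symm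

lemma smul_add_smul_eq_smul_combo {c₁ c₂ : ℚ} (hc : c₁ + c₂ ≠ 0) (y₁ y₂ : V n) :
    c₁ • y₁ + c₂ • y₂ = (c₁ + c₂) • ((c₁ / (c₁ + c₂)) • y₁ + (c₂ / (c₁ + c₂)) • y₂) := by
  rw [smul_add, smul_smul, smul_smul, mul_div_cancel₀ _ hc, mul_div_cancel₀ _ hc]

lemma mem_coneHull_iff_of_convex (ht : Convex ℚ t) (hne : t.Nonempty) {x : V n} :
    x ∈ coneHull t ↔ ∃ c : ℚ, 0 ≤ c ∧ ∃ y ∈ t, x = c • y := by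
  refine ⟨fun hx => ?_, fun ⟨c, hc, y, hy, hx⟩ => hx ▸
    (isConic_coneHull t).smul_mem hc (subset_coneHull t hy)⟩
  obtain ⟨y₀, hy₀⟩ := hne
  refine IsConic.coneHull_subset (K := {x | ∃ c : ℚ, 0 ≤ c ∧ ∃ y ∈ t, x = c • y})
    ⟨⟨0, le_rfl, y₀, hy₀, by simp⟩, ?_, ?_⟩ (fun y hy => ⟨1, zero_le_one, y, hy, by simp⟩) hx
  · rintro _ ⟨c₁, hc₁, y₁, hy₁, rfl⟩ _ ⟨c₂, hc₂, y₂, hy₂, rfl⟩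
    rcases (add_nonneg hc₁ hc₂).lt_or_eq with hc | hc
    · exact ⟨_, hc.le, _, ht hy₁ hy₂ (div_nonneg hc₁ hc.le) (div_nonneg hc₂ hc.le)
        (by rw [← add_div, div_self hc.ne']), smul_add_smul_eq_smul_combo hc.ne' y₁ y₂⟩
    · obtain ⟨rfl, rfl⟩ : c₁ = 0 ∧ c₂ = 0 := ⟨by linarith, by linarith⟩
      exact ⟨0, le_rfl, y₀, hy₀, by simp⟩
  · rintro c hc _ ⟨c', hc', y, hy, rfl⟩
    exact ⟨c * c', mul_nonneg hc hc', y, hy, smul_smul c c' y⟩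

lemma exists_linearMap_eqOn_of_affine (ht : Convex ℚ t)
    (haff : ∀ x ∈ t, ∀ y ∈ t, ∀ a b : ℚ, 0 ≤ a → 0 ≤ b → a + b = 1 →
      f (a • x + b • y) = a * f x + b * f y)
    (hhom : ∀ x ∈ t, ∀ c : ℚ, 0 ≤ c → f (c • x) = c * f x) :
    ∃ m : V n →ₗ[ℚ] ℚ, ∀ x ∈ t, f x = m x := by
  rcases t.eq_empty_or_nonempty with rfl | hne
  · exact ⟨0, by simp⟩
  obtain ⟨y₀, hy₀⟩ := hne
  have hf0 : f 0 = 0 := by simpa using hhom y₀ hy₀ 0 le_rfl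
  obtain ⟨m, hm⟩ := exists_linearMap_eqOn_of_additive (isConic_coneHull t) (f := f) (by
    intro x hx y hy
    obtain ⟨c₁, hc₁, y₁, hy₁, rfl⟩ := (mem_coneHull_iff_of_convex ht ⟨y₀, hy₀⟩).1 hx
    obtain ⟨c₂, hc₂, y₂, hy₂, rfl⟩ := (mem_coneHull_iff_of_convex ht ⟨y₀, hy₀⟩).1 hy
    rw [hhom y₁ hy₁ c₁ hc₁, hhom y₂ hy₂ c₂ hc₂]
    rcases (add_nonneg hc₁ hc₂).lt_or_eq with hc | hc
    · rw [smul_add_smul_eq_smul_combo hc.ne', hhom _ (ht hy₁ hy₂ (div_nonneg hc₁ hc.le)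
        (div_nonneg hc₂ hc.le) (by rw [← add_div, div_self hc.ne'])) _ hc.le,
        haff _ hy₁ _ hy₂ _ _ (div_nonneg hc₁ hc.le) (div_nonneg hc₂ hc.le)
          (by rw [← add_div, div_self hc.ne'])]
      field_simp
    · obtain ⟨rfl, rfl⟩ : c₁ = 0 ∧ c₂ = 0 := ⟨by linarith, by linarith⟩
      simp [hf0])
  exact ⟨m, fun x hx => hm x (subset_coneHull t hx)⟩

end LinearExtension

section Pullback

variable {X X' Y : Set (Set (V n))} {ζ τ ξ ν : Set (V n)} {S : Set (V n)}
  {π : V n →ₗ[ℚ] V n} {ψ : V n → ℚ}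

lemma IsGoodFor.singleton (h : IsGoodFor X X' ψ) (hτ : τ ∈ X) : IsGoodFor {τ} X' ψ := by
  intro τ' hτ'
  rw [Set.mem_singleton_iff.1 hτ']
  exact h τ hτ

lemma IsGoodFor.map_smul (hX' : IsFan X') (hψ : IsGoodFor {τ} X' ψ) {x : V n} (hx : x ∈ τ)
    {c : ℚ} (hc : 0 ≤ c) : ψ (c • x) = c * ψ x := by
  obtain ⟨σ, hσ, hστ, hxσ⟩ := hψ.exists_mem hX' hx
  obtain ⟨m, hm⟩ := (hψ τ rfl).2.1 σ hσ hστ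
  rw [hm _ ((hX'.isConic hσ).smul_mem hc hxσ), hm x hxσ]
  simp

lemma IsConic.preimage {K : Set (V n)} (hK : IsConic K) (f : V n →ₗ[ℚ] V n) :
    IsConic (f ⁻¹' K) where
  zero_mem := by simpa using hK.zero_mem
  add_mem _ hx _ hy := by simpa using hK.add_mem hx hy
  smul_mem _ hc _ hx := by simpa using hK.smul_mem hc hx

lemma exists_linearMap_eq_self_eq_zero {U W : Submodule ℚ (V n)} (h : Disjoint U W) :
    ∃ π : V n →ₗ[ℚ] V n, (∀ u ∈ U, π u = u) ∧ ∀ w ∈ W, π w = 0 := by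
  obtain ⟨U', hUU', hc⟩ := h.exists_isCompl
  exact ⟨U'.projection W hc, fun u hu => U'.projection_apply_left hc ⟨u, hUU' hu⟩,
    fun w hw => Submodule.projection_apply_of_mem_right hc hw⟩

structure IsProjAlong (ζ S : Set (V n)) (π : V n →ₗ[ℚ] V n) : Prop where
  isConic : IsConic ζ
  apply_left : ∀ y ∈ ζ, π y = y
  apply_right : ∀ s ∈ coneHull S, π s = 0

lemma IsProjAlong.mem (hπ : IsProjAlong ζ S π) {x : V n} (hx : x ∈ coneHull (ζ ∪ S)) :
    π x ∈ ζ ∧ x - π x ∈ coneHull S := by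
  obtain ⟨y, hy, s, hs, rfl⟩ := mem_coneHull_union_iff.1 hx
  rw [hπ.isConic.coneHull_eq] at hy
  rw [map_add, hπ.apply_left y hy, hπ.apply_right s hs, add_zero, add_sub_cancel_left]
  exact ⟨hy, hs⟩

lemma IsProjAlong.mem_of_isFaceOf (hπ : IsProjAlong ζ S π)
    (hξ : IsFaceOf ξ (coneHull (ζ ∪ S))) {x : V n} (hx : x ∈ ξ) : π x ∈ ξ := by
  obtain ⟨hπx, hs⟩ := hπ.mem (hξ.subset hx)
  refine hξ.mem_of_add_mem (subset_coneHull _ (Or.inl hπx))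
    (coneHull_mono Set.subset_union_right hs) ?_
  rwa [add_sub_cancel]

lemma IsProjAlong.exists_isFaceOf_preimage (hπ : IsProjAlong ζ S π) (hξ : IsFaceOf ξ ζ) :
    ∃ η, IsFaceOf η (coneHull (ζ ∪ S)) ∧ ∀ x ∈ coneHull (ζ ∪ S), x ∈ η ↔ π x ∈ ξ := by
  obtain ⟨g, hg, rfl⟩ := hξ
  refine ⟨_, ⟨g ∘ₗ π, fun x hx => hg _ (hπ.mem hx).1, rfl⟩, fun x hx => ?_⟩
  simp [hx, (hπ.mem hx).1]

lemma IsFan.subset_or_eq_coneHull_singleton_of_raysIn (hY : IsFan Y) (hζ : IsConic ζ)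
    (hτ : coneHull (ζ ∪ S) ∈ Y) (hS : ∀ w ∈ S, w ≠ 0) {ρ : Set (V n)} (hρ : ρ ∈ raysIn Y)
    (hρτ : ρ ⊆ coneHull (ζ ∪ S)) : ρ ⊆ ζ ∨ ∃ w ∈ S, ρ = coneHull {w} := by
  obtain ⟨g, hg, hρeq⟩ := hY.isFaceOf_of_subset hρ.1 hτ hρτ
  rw [sep_coneHull_eq fun x hx => hg x (subset_coneHull _ hx)] at hρeq
  by_cases h : ∃ w ∈ S, g w = 0
  · obtain ⟨w, hwS, hgw⟩ := h
    refine Or.inr ⟨w, hwS, (hY.isRay hρ).eq_of_coneHull_singleton_subset (hS w hwS) ?_⟩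
    exact hρeq ▸ coneHull_mono (Set.singleton_subset_iff.2 ⟨Or.inr hwS, hgw⟩)
  · push Not at h
    refine Or.inl (hρeq ▸ hζ.coneHull_subset fun a ⟨ha, hga⟩ => ?_)
    exact ha.resolve_right fun haS => h a haS hga

lemma IsFan.mem_or_eq_of_mem_raysIn_starSubdiv (hY : IsFan Y) (hν : ν ∈ raysIn Y)
    {ρ : Set (V n)} (hρ : ρ ∈ raysIn (starSubdiv Y ν)) : ρ ∈ Y ∨ ρ = ν := by
  have hρray := (hY.isSubdivision_starSubdiv hν).1.isRay hρ
  obtain ⟨v, hv0, rfl⟩ := (hY.isRay hν).exists_eq_coneHull_singleton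
  rcases hρ.1 with ⟨h, -⟩ | ⟨σ, -, -, ξ, -, -, rfl⟩
  · exact Or.inl h
  · exact Or.inr (hρray.eq_of_coneHull_singleton_subset hv0
      (Set.subset_union_right.trans (subset_coneHull _)))

lemma IsProjAlong.exists_piece_image_subset (hY : IsFan Y) (hπ : IsProjAlong ζ S π)
    (hζ : ζ ∈ Y) (hτ : coneHull (ζ ∪ S) ∈ Y) (hνζ : ν ⊆ ζ) {σ : Set (V n)}
    (hσ : σ ∈ starSubdiv Y ν) (hστ : σ ⊆ coneHull (ζ ∪ S)) :
    ∃ σ' ∈ starSubdiv Y ν, σ' ⊆ ζ ∧ ∀ x ∈ σ, π x ∈ σ' := by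
  rcases hσ with ⟨hσ, hνσ⟩ | ⟨σ₁, hσ₁, -, ξ, hξ, hνξ, rfl⟩
  · refine ⟨ζ ∩ σ, Or.inl ⟨hY.mem_of_isFaceOf hζ (hY.isFaceOf_inter hζ hσ),
      fun h => hνσ (h.trans Set.inter_subset_right)⟩, Set.inter_subset_left, fun x hx => ?_⟩
    exact ⟨(hπ.mem (hστ hx)).1, hπ.mem_of_isFaceOf (hY.isFaceOf_of_subset hσ hτ hστ) hx⟩
  · have hξY := hY.mem_of_isFaceOf hσ₁ hξ
    have hξτ : ξ ⊆ coneHull (ζ ∪ S) := Set.subset_union_left.trans (subset_coneHull _) |>.trans hστ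
    refine ⟨coneHull ((ζ ∩ ξ) ∪ ν), Or.inr ⟨ζ, hζ, hνζ, ζ ∩ ξ, hY.isFaceOf_inter hζ hξY,
      fun h => hνξ (h.trans Set.inter_subset_right), rfl⟩,
      (coneHull_subset_iff (hY.isConic hζ)).2 (Set.union_subset Set.inter_subset_left hνζ),
      (isConic_coneHull _ |>.preimage π).coneHull_subset (Set.union_subset (fun y hy => ?_)
        fun z hz => ?_)⟩
    · exact subset_coneHull _ (Or.inl ⟨(hπ.mem (hξτ hy)).1,
        hπ.mem_of_isFaceOf (hY.isFaceOf_of_subset hξY hτ hξτ) hy⟩)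
    · exact subset_coneHull _ (Or.inr (by rwa [hπ.apply_left z (hνζ hz)]))

lemma IsProjAlong.exists_piece_preimage (hY : IsFan Y) (hπ : IsProjAlong ζ S π)
    (hζ : ζ ∈ Y) (hτ : coneHull (ζ ∪ S) ∈ Y) {v : V n} (hνζ : coneHull {v} ⊆ ζ)
    {σ : Set (V n)} (hσ : σ ∈ starSubdiv Y (coneHull {v})) (hσζ : σ ⊆ ζ) :
    ∃ σ' ∈ starSubdiv Y (coneHull {v}), σ' ⊆ coneHull (ζ ∪ S) ∧
      ∀ x ∈ coneHull (ζ ∪ S), π x ∈ σ → x ∈ σ' := by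
  have hζτ : ζ ⊆ coneHull (ζ ∪ S) := Set.subset_union_left.trans (subset_coneHull _)
  rcases hσ with ⟨hσ, hνσ⟩ | ⟨σ₁, hσ₁, -, ξ, hξ, hνξ, rfl⟩
  · obtain ⟨η, hη, hηiff⟩ := hπ.exists_isFaceOf_preimage (hY.isFaceOf_of_subset hσ hζ hσζ)
    refine ⟨η, Or.inl ⟨hY.mem_of_isFaceOf hτ hη, fun h => hνσ fun z hz => ?_⟩, hη.subset,
      fun x hx hπx => (hηiff x hx).2 hπx⟩
    simpa [hπ.apply_left z (hνζ hz)] using (hηiff z (hζτ (hνζ hz))).1 (h hz)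
  · have hξY := hY.mem_of_isFaceOf hσ₁ hξ
    have hξζ : ξ ⊆ ζ := (Set.subset_union_left.trans (subset_coneHull _)).trans hσζ
    obtain ⟨η, hη, hηiff⟩ := hπ.exists_isFaceOf_preimage (hY.isFaceOf_of_subset hξY hζ hξζ)
    have hνη : ¬ coneHull {v} ⊆ η := fun h => hνξ fun z hz => by
      simpa [hπ.apply_left z (hνζ hz)] using (hηiff z (hζτ (hνζ hz))).1 (h hz)
    refine ⟨_, Or.inr ⟨_, hτ, hνζ.trans hζτ, η, hη, hνη, rfl⟩,
      (coneHull_subset_iff (isConic_coneHull _)).2 (Set.union_subset hη.subset (hνζ.trans hζτ)),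
      fun x hx hπx => ?_⟩
    obtain ⟨hπxζ, hs⟩ := hπ.mem hx
    obtain ⟨u, hu, t, ht, hπeq⟩ :=
      (mem_coneHull_union_ray_iff (hξ.isConic (hY.isConic hσ₁))).1 hπx
    have hus : u + (x - π x) ∈ coneHull (ζ ∪ S) :=
      (isConic_coneHull _).add_mem (hζτ (hξζ hu)) (coneHull_mono Set.subset_union_right hs)
    refine (mem_coneHull_union_ray_iff (hη.isConic (isConic_coneHull _))).2
      ⟨u + (x - π x), (hηiff _ hus).2 ?_, t, ht, ?_⟩
    · rwa [map_add, hπ.apply_right _ hs, add_zero, hπ.apply_left u (hξζ hu)]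
    · rw [add_right_comm, ← hπeq, add_sub_cancel]

end Pullback

section Backward

variable {X Y B C H E : Set (Set (V n))} {ζ τ ν : Set (V n)} {S : Set (V n)}
  {π : V n →ₗ[ℚ] V n} {ψ : V n → ℚ}

lemma IsProjAlong.isGoodFor_comp (hY : IsFan Y) (hπ : IsProjAlong ζ S π) (hζ : ζ ∈ Y)
    (hτ : coneHull (ζ ∪ S) ∈ Y) {v : V n} (hνζ : coneHull {v} ⊆ ζ)
    (hZ : IsFan {σ | σ ∈ starSubdiv Y (coneHull {v}) ∧ σ ⊆ ζ})
    (hψ : IsGoodFor {ζ} {σ | σ ∈ starSubdiv Y (coneHull {v}) ∧ σ ⊆ ζ} ψ) :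
    IsGoodFor {coneHull (ζ ∪ S)} (starSubdiv Y (coneHull {v})) (ψ ∘ π) := by
  rintro _ rfl
  obtain ⟨hconv, hlin, hmax⟩ := hψ ζ rfl
  refine ⟨(hconv.comp_linearMap π).subset (fun x hx => (hπ.mem hx).1)
    (isConic_coneHull _).convex, fun σ hσ hστ => ?_, fun m t htτ ht hψt => ?_⟩
  · obtain ⟨σ', hσ', hσ'ζ, himg⟩ := hπ.exists_piece_image_subset hY hζ hτ hνζ hσ hστ
    obtain ⟨m, hm⟩ := hlin σ' ⟨hσ', hσ'ζ⟩ hσ'ζ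
    exact ⟨m ∘ₗ π, fun x hx => hm _ (himg x hx)⟩
  -- `ψ` is affine on the projection of `t`, hence linear there, so the projection lies in a piece
  obtain ⟨m', hm'⟩ := exists_linearMap_eqOn_of_affine (f := ψ) (ht.linear_image π)
    (by
      rintro _ ⟨x, hx, rfl⟩ _ ⟨y, hy, rfl⟩ a b ha hb hab
      have := hψt _ (ht hx hy ha hb hab)
      simp only [Function.comp_apply, map_add, map_smul] at this hψt
      rw [this, hψt x hx, hψt y hy, smul_eq_mul, smul_eq_mul])
    (by
      rintro _ ⟨x, hx, rfl⟩ c hc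
      exact hψ.map_smul hZ (hπ.mem (htτ hx)).1 hc)
  obtain ⟨σ', ⟨hσ', hσ'ζ⟩, -, htσ'⟩ := hmax m' (π '' t)
    (by rintro _ ⟨x, hx, rfl⟩; exact (hπ.mem (htτ hx)).1) (ht.linear_image π) hm'
  obtain ⟨σ, hσ, hστ, hpre⟩ := hπ.exists_piece_preimage hY hζ hτ hνζ hσ' hσ'ζ
  exact ⟨σ, hσ, hστ, fun x hx => hpre x (htτ hx) (htσ' ⟨x, hx, rfl⟩)⟩

theorem StarSeqInvariant.exists_isGoodFor_signedOnIn (hX : IsFan X) (hQ : IsQuadData X B C H)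
    (hinv : StarSeqInvariant X E Y) (hE : E ⊆ B ∪ C ∪ H) (hν : ν ∈ raysIn X) (hνE : ν ∉ E)
    (hνBCH : ν ∈ B ∪ C ∪ H)
    (hconv : ∀ ζ ∈ X, Unsettled E ζ →
      IsConvexSubdiv {σ | σ ∈ starSubdiv Y ν ∧ σ ⊆ ζ} (faces ζ) B C H)
    (hτ : τ ∈ Y) (hντ : ν ⊆ τ) :
    ∃ ψ, IsGoodFor {τ} (starSubdiv Y ν) ψ ∧ SignedOnIn τ (starSubdiv Y ν) B C H ψ := by
  have hY := hinv.isSubdivision.1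
  have hνY : ν ∈ raysIn Y := ⟨hinv.raysIn_subset hν, hν.2⟩
  obtain ⟨ζ, hζX, hζE, S, hS, hdisj, rfl⟩ := hinv.splitsOver τ hτ
  obtain ⟨π, hπζ, hπS⟩ := exists_linearMap_eq_self_eq_zero hdisj
  have hπ : IsProjAlong ζ S π := ⟨hX.isConic hζX, fun y hy => hπζ y (Submodule.subset_span hy),
    fun s hs => hπS s (span_coneHull S ▸ Submodule.subset_span hs)⟩
  have hray : ∀ ρ ∈ raysIn Y, ρ ⊆ coneHull (ζ ∪ S) → ρ ⊆ ζ ∨ ρ ∈ E ∧ ∀ x ∈ ρ, π x = 0 := by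
    intro ρ hρ hρτ
    refine (hY.subset_or_eq_coneHull_singleton_of_raysIn hπ.isConic hτ (fun w hw => (hS w hw).1)
      hρ hρτ).imp_right ?_
    rintro ⟨w, hw, rfl⟩
    exact ⟨(hS w hw).2,
      fun x hx => hπ.apply_right x (coneHull_mono (Set.singleton_subset_iff.2 hw) hx)⟩
  have hνζ : ν ⊆ ζ := (hray ν hνY hντ).resolve_right fun h => hνE h.1
  obtain ⟨⟨hZ, -, -⟩, ψ, hψ, hsψ⟩ := hconv ζ hζX hζE
  have hψζ := hψ.singleton (IsFaceOf.refl ζ)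
  have hψ0 := hψζ.apply_zero hZ
  have hρY : ∀ ρ ∈ raysIn (starSubdiv Y ν), ρ ∉ B → ρ ∉ C → ρ ∉ H → ρ ∈ raysIn Y := by
    intro ρ hρ hB hC hH
    refine ⟨(hY.mem_or_eq_of_mem_raysIn_starSubdiv hνY hρ).resolve_right ?_, hρ.2⟩
    rintro rfl
    rcases hνBCH with (h | h) | h
    exacts [hB h, hC h, hH h]
  obtain ⟨v, -, rfl⟩ := (hY.isRay hνY).exists_eq_coneHull_singleton
  refine ⟨ψ ∘ π, hπ.isGoodFor_comp hY (hinv.mem_of_unsettled ζ hζX hζE) hτ hνζ hZ hψζ,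
    fun ρ hρ hρτ x hx => ?_, fun ρ hρ hρτ x hx => ?_, fun ρ hρ hρτ hB hC hH x hx => ?_⟩
  · rcases hray ρ ⟨hinv.raysIn_subset (hQ.1 hρ), (hQ.1 hρ).2⟩ hρτ with hρζ | ⟨-, h0⟩
    · simpa [hπ.apply_left x (hρζ hx)] using hsψ.1 ρ hρ x hx
    · simp [h0 x hx, hψ0]
  · rcases hray ρ ⟨hinv.raysIn_subset (hQ.2.1 hρ), (hQ.2.1 hρ).2⟩ hρτ with hρζ | ⟨-, h0⟩
    · simpa [hπ.apply_left x (hρζ hx)] using hsψ.2.1 ρ hρ x hx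
    · simp [h0 x hx, hψ0]
  · rcases hray ρ (hρY ρ hρ hB hC hH) hρτ with hρζ | ⟨hρE, -⟩
    · simpa [hπ.apply_left x (hρζ hx)] using hsψ.2.2 ρ ⟨⟨hρ.1, hρζ⟩, hρ.2⟩ hB hC hH x hx
    · rcases hE hρE with (h | h) | h
      exacts [absurd h hB, absurd h hC, absurd h hH]

lemma isGoodFor_singleton_zero {X' : Set (Set (V n))} (hτ : τ ∈ X') (hconv : Convex ℚ τ) :
    IsGoodFor {τ} X' 0 := by
  intro τ' hτ'
  rw [Set.mem_singleton_iff.1 hτ']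
  exact ⟨convexOn_const 0 hconv, fun _ _ _ => ⟨0, by simp⟩,
    fun _ _ htτ _ _ => ⟨τ, hτ, subset_rfl, htτ⟩⟩

end Backward

/-- In a sequence of star subdivisions (processed in the reversed order `𝒪⁻`),
the step at the ray `ν` (with the rays of `L₂` coming after `ν` in `𝒪`, hence already
processed) is locally-convex iff for every `L₂`-unsettled cone `ζ` of `X`, the cones of the
next fan contained in `ζ` form a convex subdivision of the affine fan of `ζ`. -/
theorem seqStar_step_locallyConvex_iff {n : ℕ} (X B C H : Set (Set (V n)))
    (hFan : IsFan X) (hQ : IsQuadData X B C H)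
    (L₁ L₂ : List (Set (V n))) (ν : Set (V n))
    (hnd : (L₁ ++ ν :: L₂).Nodup)
    (hmem : ∀ μ ∈ L₁ ++ ν :: L₂, μ ∈ B ∪ C ∪ H) :
    IsLocallyConvexSubdiv (starSubdiv (L₂.reverse.foldl starSubdiv X) ν)
        (L₂.reverse.foldl starSubdiv X) B C H ↔
      ∀ ζ ∈ X, Unsettled {μ | μ ∈ L₂} ζ →
        IsConvexSubdiv {σ | σ ∈ starSubdiv (L₂.reverse.foldl starSubdiv X) ν ∧ σ ⊆ ζ}
          (faces ζ) B C H := by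
  have hrays : ∀ μ ∈ L₁ ++ ν :: L₂, μ ∈ raysIn X := fun μ hμ => by
    rcases hmem μ hμ with (h | h) | h
    exacts [hQ.1 h, hQ.2.1 h, hQ.2.2.1 h]
  have hinv : StarSeqInvariant X {μ | μ ∈ L₂} (L₂.reverse.foldl starSubdiv X) := by
    simpa using starSeqInvariant_foldl hFan L₂.reverse
      fun μ hμ => hrays μ (by simp [List.mem_reverse.1 hμ])
  have hν := hrays ν (by simp)
  have hsub := hinv.isSubdivision.1.isSubdivision_starSubdiv ⟨hinv.raysIn_subset hν, hν.2⟩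
  constructor
  · rintro ⟨-, hloc⟩ ζ hζ hζE
    obtain ⟨ψ, hψ, hs⟩ := hloc ζ (hinv.mem_of_unsettled ζ hζ hζE)
    exact isConvexSubdiv_faces_of_isGoodFor hFan hQ hsub.1 hζ hψ hs
  · refine fun hconv => ⟨hsub, fun τ hτ => ?_⟩
    by_cases hντ : ν ⊆ τ
    · exact hinv.exists_isGoodFor_signedOnIn hFan hQ
        (fun μ hμ => hmem μ (List.mem_append_right _ (List.mem_cons_of_mem _ hμ))) hν
        (List.nodup_cons.1 hnd.of_append_right).1 (hmem ν (by simp)) hconv hτ hντ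
    · exact ⟨0, isGoodFor_singleton_zero (Or.inl ⟨hτ, hντ⟩)
        (hinv.isSubdivision.1.isConic hτ).convex, by simp [SignedOnIn]⟩

end ToricPaper
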